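/- arXiv:2206.04347 — 4 statements merged into one kernel-verified Lean document; each statement's English description precedes it below -/
import Mathlib

section
/- Let P, Q, R be finite connected posets. Then ⟨δ(P), Q ⊗ R⟩ = (1/|min(P)|) ⟨P, Q ▷ R⟩. Explicitly, (1/|min(P)|) Σ_{I ◎ P} ⟨I, Q⟩ · ⟨P \ I, R⟩ = (1/|min(P)|) Σ_{v ∈ min(R)} ⟨P, Q ↘_v R⟩. -/
open scoped Classical

/-- A finite poset on a subset (`carrier`) of an ambient type `α`. -/
structure FinPoset (α : Type*) where
  carrier : Finset α
  le : α → α → Prop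
  mem_of_le : ∀ ⦃x y⦄, le x y → x ∈ carrier ∧ y ∈ carrier
  le_refl : ∀ x ∈ carrier, le x x
  le_trans : ∀ ⦃x y z⦄, le x y → le y z → le x z
  le_antisymm : ∀ ⦃x y⦄, le x y → le y x → x = y

namespace FinPoset

variable {α : Type*} [DecidableEq α]

/-- The strict order `x <_P y`. -/
def lt (P : FinPoset α) (x y : α) : Prop := P.le x y ∧ x ≠ y

/-- `min(P)`: the set of minimal elements of `P`. -/
noncomputable def minSet (P : FinPoset α) : Finset α :=
  P.carrier.filter (fun x => ∀ y, P.le y x → y = x)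

/-- Connectivity of a subset `S`, for the graph with edges between comparable pairs. -/
def ConnOn (P : FinPoset α) (S : Set α) : Prop :=
  ∀ x ∈ S, ∀ y ∈ S,
    Relation.ReflTransGen (fun a b => a ∈ S ∧ b ∈ S ∧ (P.le a b ∨ P.le b a)) x y

/-- A finite poset is connected if it is nonempty and any two elements are linked by a
chain of comparable pairs. -/
def Connected (P : FinPoset α) : Prop :=
  P.carrier.Nonempty ∧ P.ConnOn ↑P.carrier

/-- `I` is a connected component of `S` (for the comparability graph of `P`). -/
def IsCC (P : FinPoset α) (S I : Set α) : Prop :=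
  I.Nonempty ∧ I ⊆ S ∧ P.ConnOn I ∧
    ∀ x ∈ I, ∀ y ∈ S, (P.le x y ∨ P.le y x) → y ∈ I

/-- `I_- = {x ∈ P \ I : ∃ y ∈ I, x ≤_P y}`. -/
noncomputable def below (P : FinPoset α) (I : Finset α) : Finset α :=
  (P.carrier \ I).filter (fun x => ∃ y ∈ I, P.le x y)

/-- `I ◎ P` : `I_-` is a singleton `{w}` with `w ∈ min(P)`, and `I` is a connected
component of `{x ∈ P : w <_P x}`. -/
def Circ (P : FinPoset α) (I : Finset α) : Prop :=
  ∃ w, P.below I = {w} ∧ w ∈ P.minSet ∧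
    P.IsCC {x | x ∈ P.carrier ∧ P.lt w x} ↑I

/-- The induced poset on a subset `S`. -/
def restrict (P : FinPoset α) (S : Finset α) : FinPoset α where
  carrier := P.carrier ∩ S
  le x y := P.le x y ∧ x ∈ S ∧ y ∈ S
  mem_of_le := by
    intro x y h
    rcases P.mem_of_le h.1 with ⟨hx, hy⟩
    exact ⟨Finset.mem_inter.2 ⟨hx, h.2.1⟩, Finset.mem_inter.2 ⟨hy, h.2.2⟩⟩
  le_refl := by
    intro x hx
    rcases Finset.mem_inter.1 hx with ⟨h1, h2⟩
    exact ⟨P.le_refl x h1, h2, h2⟩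
  le_trans := by
    rintro x y z ⟨h1, hx, hy⟩ ⟨h2, _, hz⟩
    exact ⟨P.le_trans h1 h2, hx, hz⟩
  le_antisymm := by
    rintro x y ⟨h1, _, _⟩ ⟨h2, _, _⟩
    exact P.le_antisymm h1 h2

/-- The grafting `P ↘_v Q` of `P` above the vertex `v` of `Q` (auxiliary version, with
the disjointness hypotheses as arguments). -/
def graftAux (P Q : FinPoset α) (v : α) (hd : Disjoint P.carrier Q.carrier)
    (hv : v ∈ Q.carrier) : FinPoset α where
  carrier := P.carrier ∪ Q.carrier
  le x y := P.le x y ∨ Q.le x y ∨ (Q.le x v ∧ y ∈ P.carrier)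
  mem_of_le := by
    rintro x y (h | h | ⟨h1, h2⟩)
    · rcases P.mem_of_le h with ⟨hx, hy⟩
      exact ⟨Finset.mem_union_left _ hx, Finset.mem_union_left _ hy⟩
    · rcases Q.mem_of_le h with ⟨hx, hy⟩
      exact ⟨Finset.mem_union_right _ hx, Finset.mem_union_right _ hy⟩
    · exact ⟨Finset.mem_union_right _ (Q.mem_of_le h1).1, Finset.mem_union_left _ h2⟩
  le_refl := by
    intro x hx
    rcases Finset.mem_union.1 hx with h | h
    · exact Or.inl (P.le_refl x h)
    · exact Or.inr (Or.inl (Q.le_refl x h))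
  le_trans := by
    rintro x y z (h1 | h1 | ⟨h1, h1'⟩) (h2 | h2 | ⟨h2, h2'⟩)
    · exact Or.inl (P.le_trans h1 h2)
    · exact absurd (Q.mem_of_le h2).1 (Finset.disjoint_left.1 hd (P.mem_of_le h1).2)
    · exact absurd (Q.mem_of_le h2).1 (Finset.disjoint_left.1 hd (P.mem_of_le h1).2)
    · exact absurd (P.mem_of_le h2).1 (Finset.disjoint_right.1 hd (Q.mem_of_le h1).2)
    · exact Or.inr (Or.inl (Q.le_trans h1 h2))
    · exact Or.inr (Or.inr ⟨Q.le_trans h1 h2, h2'⟩)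
    · exact Or.inr (Or.inr ⟨h1, (P.mem_of_le h2).2⟩)
    · exact absurd (Q.mem_of_le h2).1 (Finset.disjoint_left.1 hd h1')
    · exact absurd (Q.mem_of_le h2).1 (Finset.disjoint_left.1 hd h1')
  le_antisymm := by
    rintro x y (h1 | h1 | ⟨h1, h1'⟩) (h2 | h2 | ⟨h2, h2'⟩)
    · exact P.le_antisymm h1 h2
    · exact absurd (Q.mem_of_le h2).1 (Finset.disjoint_left.1 hd (P.mem_of_le h1).2)
    · exact absurd (Q.mem_of_le h2).1 (Finset.disjoint_left.1 hd (P.mem_of_le h1).2)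
    · exact absurd (P.mem_of_le h2).1 (Finset.disjoint_right.1 hd (Q.mem_of_le h1).2)
    · exact Q.le_antisymm h1 h2
    · exact absurd (Q.mem_of_le h1).1 (Finset.disjoint_left.1 hd h2')
    · exact absurd (P.mem_of_le h2).2 (Finset.disjoint_right.1 hd (Q.mem_of_le h1).1)
    · exact absurd (Q.mem_of_le h2).1 (Finset.disjoint_left.1 hd h1')
    · exact absurd (Q.mem_of_le h1).1 (Finset.disjoint_left.1 hd h2')
  
/-- The grafting `P ↘_v Q` of `P` above the vertex `v` of `Q`: the poset on
`X₁ ⊔ X₂` restricting to `P` on `X₁` and to `Q` on `X₂`, with `q ≤ p` for `q ∈ X₂`,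
`p ∈ X₁` iff `q ≤_Q v`.  (Junk value when the carriers are not disjoint or `v ∉ Q`.) -/
noncomputable def graft (P Q : FinPoset α) (v : α) : FinPoset α :=
  if h : Disjoint P.carrier Q.carrier ∧ v ∈ Q.carrier then P.graftAux Q v h.1 h.2 else P

/-- The set of subsets `I` of the carrier with `I ◎ P`. -/
noncomputable def circSet (P : FinPoset α) : Finset (Finset α) :=
  P.carrier.powerset.filter (fun I => P.Circ I)

/-- Order isomorphisms from `A` to `B`, encoded as maps `α → α` that are the identity
outside of the carrier of `A`. -/
def Isos (A B : FinPoset α) : Set (α → α) :=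
  {f | Set.BijOn f ↑A.carrier ↑B.carrier ∧
    (∀ x ∈ A.carrier, ∀ y ∈ A.carrier, (A.le x y ↔ B.le (f x) (f y))) ∧
    ∀ x, x ∉ A.carrier → f x = x}

/-- `⟨A, B⟩`: the number of order isomorphisms from `A` to `B`. -/
noncomputable def pairing (A B : FinPoset α) : ℕ := Nat.card ↥(Isos A B)

/-- The NAP coproduct `δ(P) = (1/|min(P)|) Σ_{I ◎ P} I ⊗ (P \ I)`, with values in the
rational vector space spanned by pairs of finite posets. -/
noncomputable def delta (P : FinPoset α) : (FinPoset α × FinPoset α) →₀ ℚ :=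
  ((P.minSet.card : ℚ))⁻¹ • ∑ I ∈ P.circSet,
    Finsupp.single (P.restrict I, P.restrict (P.carrier \ I)) (1 : ℚ)

end FinPoset


namespace FinPoset

variable {α : Type*} [DecidableEq α]

lemma mem_minSet {P : FinPoset α} {w : α} :
    w ∈ P.minSet ↔ w ∈ P.carrier ∧ ∀ y, P.le y w → y = w := by
  simp [minSet]

lemma restrict_carrier_of_subset {P : FinPoset α} {S : Finset α} (h : S ⊆ P.carrier) :
    (P.restrict S).carrier = S := by
  simp [restrict, Finset.inter_eq_right.2 h]

lemma restrict_carrier_sdiff (P : FinPoset α) (S : Finset α) :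
    (P.restrict (P.carrier \ S)).carrier = P.carrier \ S :=
  restrict_carrier_of_subset (Finset.sdiff_subset)

instance isos_finite (A B : FinPoset α) : Finite ↥(Isos A B) := by
  classical
  have : Function.Injective
      (fun f : ↥(Isos A B) =>
        (fun x : ↥A.carrier => (⟨(f : α → α) x, f.2.1.mapsTo x.2⟩ : ↥B.carrier))) := by
    rintro ⟨f, hf⟩ ⟨g, hg⟩ h
    ext x
    show f x = g x
    by_cases hx : x ∈ A.carrier
    · exact congrArg Subtype.val (congrFun h ⟨x, hx⟩)
    · rw [hf.2.2 x hx, hg.2.2 x hx]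
  exact Finite.of_injective _ this


lemma mycard_sigma {ι : Type*} [Fintype ι] (f : ι → Type*) [∀ i, Finite (f i)] :
    Nat.card (Σ i, f i) = ∑ i, Nat.card (f i) := by
  letI : ∀ i, Fintype (f i) := fun i => Fintype.ofFinite _
  simp [Nat.card_eq_fintype_card]


section CircFacts

variable {P : FinPoset α} {I : Finset α} {w : α}

lemma circ_w_mem (hbelow : P.below I = {w}) : w ∈ P.carrier ∧ w ∉ I := by
  have hw : w ∈ P.below I := by rw [hbelow]; exact Finset.mem_singleton_self w
  have := (Finset.mem_filter.1 hw).1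
  exact Finset.mem_sdiff.1 this

lemma circ_lt (hcc : P.IsCC {x | x ∈ P.carrier ∧ P.lt w x} ↑I) {y : α} (hy : y ∈ I) :
    P.lt w y :=
  (hcc.2.1 (by exact_mod_cast hy)).2

lemma circ_below (hbelow : P.below I = {w}) {x y : α} (hx : x ∈ P.carrier) (hxI : x ∉ I)
    (hy : y ∈ I) (hle : P.le x y) : x = w := by
  have : x ∈ P.below I :=
    Finset.mem_filter.2 ⟨Finset.mem_sdiff.2 ⟨hx, hxI⟩, ⟨y, hy, hle⟩⟩
  rw [hbelow] at this; exact Finset.mem_singleton.1 this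

lemma circ_up (hcc : P.IsCC {x | x ∈ P.carrier ∧ P.lt w x} ↑I) {y x : α}
    (hy : y ∈ I) (hle : P.le y x) : x ∈ I := by
  have hx : x ∈ P.carrier := (P.mem_of_le hle).2
  by_contra hxI
  have hwy := circ_lt hcc hy
  have hwx : P.le w x := P.le_trans hwy.1 hle
  have hxw : w ≠ x := by
    rintro rfl
    exact hwy.2 (P.le_antisymm hwy.1 hle)
  have hxS : x ∈ {x | x ∈ P.carrier ∧ P.lt w x} := ⟨hx, hwx, hxw⟩
  exact hxI (by exact_mod_cast hcc.2.2.2 y (by exact_mod_cast hy) x hxS (Or.inl hle))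

lemma circ_cross (hbelow : P.below I = {w})
    (hcc : P.IsCC {x | x ∈ P.carrier ∧ P.lt w x} ↑I) {x y : α}
    (hx : x ∈ P.carrier) (hxI : x ∉ I) (hy : y ∈ I) :
    P.le x y ↔ x = w := by
  constructor
  · exact fun hle => circ_below hbelow hx hxI hy hle
  · rintro rfl; exact (circ_lt hcc hy).1

end CircFacts

section GraftFacts

variable {Q R : FinPoset α} {v : α}

lemma graft_eq (hd : Disjoint Q.carrier R.carrier) (hv : v ∈ R.carrier) :
    Q.graft R v = Q.graftAux R v hd hv := dif_pos ⟨hd, hv⟩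

lemma graftAux_le_qq (hd : Disjoint Q.carrier R.carrier) (hv : v ∈ R.carrier)
    {a b : α} (ha : a ∈ Q.carrier) :
    (Q.graftAux R v hd hv).le a b ↔ Q.le a b := by
  constructor
  · rintro (h | h | ⟨h, _⟩)
    · exact h
    · exact absurd (R.mem_of_le h).1 (Finset.disjoint_left.1 hd ha)
    · exact absurd (R.mem_of_le h).1 (Finset.disjoint_left.1 hd ha)
  · exact Or.inl

lemma graftAux_le_rr (hd : Disjoint Q.carrier R.carrier) (hv : v ∈ R.carrier)
    {a b : α} (ha : a ∈ R.carrier) (hb : b ∈ R.carrier) :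
    (Q.graftAux R v hd hv).le a b ↔ R.le a b := by
  constructor
  · rintro (h | h | ⟨h, h2⟩)
    · exact absurd (Q.mem_of_le h).1 (Finset.disjoint_right.1 hd ha)
    · exact h
    · exact absurd h2 (Finset.disjoint_right.1 hd hb)
  · exact fun h => Or.inr (Or.inl h)

lemma graftAux_le_rq (hd : Disjoint Q.carrier R.carrier) (hv : v ∈ R.carrier)
    {a b : α} (ha : a ∈ R.carrier) (hb : b ∈ Q.carrier) :
    (Q.graftAux R v hd hv).le a b ↔ R.le a v := by
  constructor
  · rintro (h | h | ⟨h, _⟩)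
    · exact absurd (Q.mem_of_le h).1 (Finset.disjoint_right.1 hd ha)
    · exact absurd (R.mem_of_le h).2 (Finset.disjoint_left.1 hd hb)
    · exact h
  · exact fun h => Or.inr (Or.inr ⟨h, hb⟩)

end GraftFacts

section IsoFacts

lemma iso_le {A B : FinPoset α} {f : α → α} (hf : f ∈ A.Isos B) {x y : α}
    (hx : x ∈ A.carrier) (hy : y ∈ A.carrier) : A.le x y ↔ B.le (f x) (f y) :=
  hf.2.1 x hx y hy

lemma restrict_le_iff {P : FinPoset α} {S : Finset α} {x y : α} (hx : x ∈ S) (hy : y ∈ S) :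
    (P.restrict S).le x y ↔ P.le x y :=
  ⟨fun h => h.1, fun h => ⟨h, hx, hy⟩⟩

end IsoFacts

/-- Combine isomorphisms on `I` and its complement into one map. -/
noncomputable def combineFun (P : FinPoset α) (I : Finset α) (g h : α → α) : α → α :=
  fun x => if x ∈ I then g x else if x ∈ P.carrier then h x else x

section Combine

variable {P Q R : FinPoset α} {I : Finset α} {g h : α → α} {w : α}

theorem combine_spec
    (hQR : Disjoint Q.carrier R.carrier)
    (hI : I ⊆ P.carrier)
    (hbelow : P.below I = {w}) (hwmin : w ∈ P.minSet)
    (hcc : P.IsCC {x | x ∈ P.carrier ∧ P.lt w x} ↑I)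
    (hg : g ∈ (P.restrict I).Isos Q)
    (hh : h ∈ (P.restrict (P.carrier \ I)).Isos R) :
    h w ∈ R.minSet ∧ P.combineFun I g h ∈ P.Isos (Q.graft R (h w)) := by
  obtain ⟨hwc, hwI⟩ := circ_w_mem hbelow
  have hwD : w ∈ P.carrier \ I := Finset.mem_sdiff.2 ⟨hwc, hwI⟩
  have hIc : (P.restrict I).carrier = I := restrict_carrier_of_subset hI
  have hDc : (P.restrict (P.carrier \ I)).carrier = P.carrier \ I :=
    restrict_carrier_sdiff P I
  have hgB : Set.BijOn g ↑I ↑Q.carrier := by have := hg.1; rwa [hIc] at this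
  have hhB : Set.BijOn h ↑(P.carrier \ I) ↑R.carrier := by have := hh.1; rwa [hDc] at this
  have gle : ∀ x ∈ I, ∀ y ∈ I, (P.le x y ↔ Q.le (g x) (g y)) := by
    intro x hx y hy
    rw [← restrict_le_iff hx hy]
    exact iso_le hg (by rw [hIc]; exact hx) (by rw [hIc]; exact hy)
  have hle : ∀ x ∈ P.carrier \ I, ∀ y ∈ P.carrier \ I, (P.le x y ↔ R.le (h x) (h y)) := by
    intro x hx y hy
    rw [← restrict_le_iff hx hy]
    exact iso_le hh (by rw [hDc]; exact hx) (by rw [hDc]; exact hy)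
  have hv : h w ∈ R.carrier := hhB.mapsTo hwD
  have hvmin : h w ∈ R.minSet := by
    rw [mem_minSet]
    refine ⟨hv, fun z hz => ?_⟩
    obtain ⟨x, hx, rfl⟩ := hhB.surjOn (by exact_mod_cast (R.mem_of_le hz).1)
    have hx' : x ∈ P.carrier \ I := by exact_mod_cast hx
    have : P.le x w := (hle x hx' w hwD).2 hz
    have : x = w := (mem_minSet.1 hwmin).2 x this
    rw [this]
  refine ⟨hvmin, ?_⟩
  rw [graft_eq hQR hv]
  have fval_I : ∀ x ∈ I, P.combineFun I g h x = g x := fun x hx => if_pos hx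
  have fval_D : ∀ x ∈ P.carrier \ I, P.combineFun I g h x = h x := by
    intro x hx
    obtain ⟨h1, h2⟩ := Finset.mem_sdiff.1 hx
    simp [combineFun, h1, h2]
  have fval_out : ∀ x, x ∉ P.carrier → P.combineFun I g h x = x := by
    intro x hx
    have : x ∉ I := fun hxx => hx (hI hxx)
    simp [combineFun, hx, this]
  set G := Q.graftAux R (h w) hQR hv with hG
  have hGc : G.carrier = Q.carrier ∪ R.carrier := rfl
  refine ⟨⟨?_, ?_, ?_⟩, ?_, fval_out⟩
  · -- MapsTo
    intro x hx
    have hx' : x ∈ P.carrier := hx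
    by_cases hxI : x ∈ I
    · rw [fval_I x hxI, hGc]
      exact_mod_cast Finset.mem_union_left _ (hgB.mapsTo (by exact_mod_cast hxI))
    · have hxD : x ∈ P.carrier \ I := Finset.mem_sdiff.2 ⟨hx', hxI⟩
      rw [fval_D x hxD, hGc]
      exact_mod_cast Finset.mem_union_right _ (hhB.mapsTo hxD)
  · -- InjOn
    intro x hx y hy hfxy
    have hx' : x ∈ P.carrier := hx
    have hy' : y ∈ P.carrier := hy
    by_cases hxI : x ∈ I <;> by_cases hyI : y ∈ I
    · exact hgB.injOn (by exact_mod_cast hxI) (by exact_mod_cast hyI)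
        (by rwa [fval_I x hxI, fval_I y hyI] at hfxy)
    · have hyD : y ∈ P.carrier \ I := Finset.mem_sdiff.2 ⟨hy', hyI⟩
      rw [fval_I x hxI, fval_D y hyD] at hfxy
      have h1 : g x ∈ Q.carrier := hgB.mapsTo (by exact_mod_cast hxI)
      have h2 : h y ∈ R.carrier := hhB.mapsTo hyD
      rw [hfxy] at h1
      exact absurd h2 (Finset.disjoint_left.1 hQR h1)
    · have hxD : x ∈ P.carrier \ I := Finset.mem_sdiff.2 ⟨hx', hxI⟩
      rw [fval_D x hxD, fval_I y hyI] at hfxy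
      have h1 : g y ∈ Q.carrier := hgB.mapsTo (by exact_mod_cast hyI)
      have h2 : h x ∈ R.carrier := hhB.mapsTo hxD
      rw [← hfxy] at h1
      exact absurd h2 (Finset.disjoint_left.1 hQR h1)
    · have hxD : x ∈ P.carrier \ I := Finset.mem_sdiff.2 ⟨hx', hxI⟩
      have hyD : y ∈ P.carrier \ I := Finset.mem_sdiff.2 ⟨hy', hyI⟩
      exact hhB.injOn hxD hyD (by rwa [fval_D x hxD, fval_D y hyD] at hfxy)
  · -- SurjOn
    intro b hb
    rw [hGc] at hb
    rcases Finset.mem_union.1 (by exact_mod_cast hb) with hbQ | hbR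
    · obtain ⟨x, hx, rfl⟩ := hgB.surjOn (by exact_mod_cast hbQ)
      have hx' : x ∈ I := by exact_mod_cast hx
      exact ⟨x, by exact_mod_cast hI hx', fval_I x hx'⟩
    · obtain ⟨x, hx, rfl⟩ := hhB.surjOn (by exact_mod_cast hbR)
      have hx' : x ∈ P.carrier \ I := by exact_mod_cast hx
      exact ⟨x, by exact_mod_cast (Finset.mem_sdiff.1 hx').1, fval_D x hx'⟩
  · -- order iso
    intro x hx y hy
    by_cases hxI : x ∈ I <;> by_cases hyI : y ∈ I
    · rw [fval_I x hxI, fval_I y hyI,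
        graftAux_le_qq hQR hv (hgB.mapsTo (by exact_mod_cast hxI))]
      exact gle x hxI y hyI
    · -- x ∈ I, y ∉ I : both sides false
      have hyD : y ∈ P.carrier \ I := Finset.mem_sdiff.2 ⟨hy, hyI⟩
      rw [fval_I x hxI, fval_D y hyD]
      have hgx : g x ∈ Q.carrier := hgB.mapsTo (by exact_mod_cast hxI)
      have hhy : h y ∈ R.carrier := hhB.mapsTo hyD
      constructor
      · intro hle'
        exact absurd (circ_up hcc hxI hle') hyI
      · rintro (h1 | h1 | ⟨h1, h2⟩)
        · exact absurd (Q.mem_of_le h1).2 fun hq =>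
            (Finset.disjoint_left.1 hQR hq) hhy
        · exact absurd (R.mem_of_le h1).1 fun hr =>
            (Finset.disjoint_left.1 hQR hgx) hr
        · exact absurd (R.mem_of_le h1).1 fun hr =>
            (Finset.disjoint_left.1 hQR hgx) hr
    · -- x ∉ I, y ∈ I
      have hxD : x ∈ P.carrier \ I := Finset.mem_sdiff.2 ⟨hx, hxI⟩
      rw [fval_D x hxD, fval_I y hyI,
        graftAux_le_rq hQR hv (hhB.mapsTo hxD) (hgB.mapsTo (by exact_mod_cast hyI))]
      rw [circ_cross hbelow hcc hx hxI hyI, ← hle x hxD w hwD]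
      constructor
      · intro hxw; rw [hxw]; exact P.le_refl _ hwc
      · exact fun hle' => (mem_minSet.1 hwmin).2 x hle'
    · have hxD : x ∈ P.carrier \ I := Finset.mem_sdiff.2 ⟨hx, hxI⟩
      have hyD : y ∈ P.carrier \ I := Finset.mem_sdiff.2 ⟨hy, hyI⟩
      rw [fval_D x hxD, fval_D y hyD,
        graftAux_le_rr hQR hv (hhB.mapsTo hxD) (hhB.mapsTo hyD)]
      exact hle x hxD y hyD

end Combine

/-- The part of `P` mapped to `Q` by `f`. -/
noncomputable def decI (P Q : FinPoset α) (f : α → α) : Finset α :=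
  P.carrier.filter (fun x => f x ∈ Q.carrier)

noncomputable def decG (P Q : FinPoset α) (f : α → α) : α → α :=
  fun x => if x ∈ P.decI Q f then f x else x

noncomputable def decH (P Q : FinPoset α) (f : α → α) : α → α :=
  fun x => if x ∈ P.carrier \ P.decI Q f then f x else x

section Decompose

variable {P Q R : FinPoset α} {f : α → α} {v : α}

theorem decompose_spec
    (hQR : Disjoint Q.carrier R.carrier)
    (hQ : Q.Connected)
    (hvmin : v ∈ R.minSet)
    (hf : f ∈ P.Isos (Q.graft R v)) :
    P.decI Q f ∈ P.circSet ∧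
      P.decG Q f ∈ (P.restrict (P.decI Q f)).Isos Q ∧
      P.decH Q f ∈ (P.restrict (P.carrier \ P.decI Q f)).Isos R ∧
      ∀ w, P.below (P.decI Q f) = {w} → P.decH Q f w = v := by
  obtain ⟨hvR, hvm⟩ := mem_minSet.1 hvmin
  rw [graft_eq hQR hvR] at hf
  set G := Q.graftAux R v hQR hvR with hGdef
  have hGc : G.carrier = Q.carrier ∪ R.carrier := rfl
  obtain ⟨hfB, ford, fout⟩ := hf
  set I := P.decI Q f with hIdef
  have memI : ∀ x, x ∈ I ↔ x ∈ P.carrier ∧ f x ∈ Q.carrier := by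
    intro x; simp [hIdef, decI]
  have hIsub : I ⊆ P.carrier := fun x hx => (Finset.mem_filter.1 hx).1
  have fD : ∀ x ∈ P.carrier \ I, f x ∈ R.carrier := by
    intro x hx
    obtain ⟨hx1, hx2⟩ := Finset.mem_sdiff.1 hx
    have : f x ∈ G.carrier := hfB.mapsTo (by exact_mod_cast hx1)
    rw [hGc] at this
    rcases Finset.mem_union.1 (by exact_mod_cast this) with h1 | h1
    · exact absurd ((memI x).2 ⟨hx1, h1⟩) hx2
    · exact h1
  obtain ⟨w₀, hw₀c, hfw₀⟩ : ∃ w₀ ∈ P.carrier, f w₀ = v := by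
    obtain ⟨x, hx, hfx⟩ := hfB.surjOn
      (show v ∈ (↑G.carrier : Set α) by
        rw [hGc]; exact_mod_cast Finset.mem_union_right _ hvR)
    exact ⟨x, by exact_mod_cast hx, hfx⟩
  have hw₀I : w₀ ∉ I := by
    intro hw
    have := ((memI w₀).1 hw).2
    rw [hfw₀] at this
    exact Finset.disjoint_left.1 hQR this hvR
  have hw₀D : w₀ ∈ P.carrier \ I := Finset.mem_sdiff.2 ⟨hw₀c, hw₀I⟩
  -- order transfers
  have leQQ : ∀ x ∈ I, ∀ y ∈ I, (P.le x y ↔ Q.le (f x) (f y)) := by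
    intro x hx y hy
    rw [ford x (hIsub hx) y (hIsub hy),
      graftAux_le_qq hQR hvR ((memI x).1 hx).2]
  have leRR : ∀ x ∈ P.carrier \ I, ∀ y ∈ P.carrier \ I, (P.le x y ↔ R.le (f x) (f y)) := by
    intro x hx y hy
    rw [ford x (Finset.mem_sdiff.1 hx).1 y (Finset.mem_sdiff.1 hy).1,
      graftAux_le_rr hQR hvR (fD x hx) (fD y hy)]
  have leRQ : ∀ x ∈ P.carrier \ I, ∀ y ∈ I, (P.le x y ↔ R.le (f x) v) := by
    intro x hx y hy
    rw [ford x (Finset.mem_sdiff.1 hx).1 y (hIsub hy),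
      graftAux_le_rq hQR hvR (fD x hx) ((memI y).1 hy).2]
  have leQR : ∀ x ∈ I, ∀ y ∈ P.carrier \ I, ¬ P.le x y := by
    intro x hx y hy hle
    rw [ford x (hIsub hx) y (Finset.mem_sdiff.1 hy).1,
      graftAux_le_qq hQR hvR ((memI x).1 hx).2] at hle
    exact Finset.disjoint_left.1 hQR (Q.mem_of_le hle).2 (fD y hy)
  have hInonempty : ∃ y, y ∈ I := by
    obtain ⟨q, hq⟩ := hQ.1
    obtain ⟨x, hx, hfx⟩ := hfB.surjOn
      (show q ∈ (↑G.carrier : Set α) by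
        rw [hGc]; exact_mod_cast Finset.mem_union_left _ hq)
    exact ⟨x, (memI x).2 ⟨by exact_mod_cast hx, by rw [hfx]; exact hq⟩⟩
  have hw₀le : ∀ y ∈ I, P.le w₀ y := by
    intro y hy
    rw [leRQ w₀ hw₀D y hy, hfw₀]
    exact R.le_refl v hvR
  have hw₀lt : ∀ y ∈ I, P.lt w₀ y := by
    intro y hy
    refine ⟨hw₀le y hy, fun hwy => ?_⟩
    rw [hwy] at hw₀I; exact hw₀I hy
  -- (A) below I = {w₀}
  have hbelow : P.below I = {w₀} := by
    ext x
    simp only [below, Finset.mem_filter, Finset.mem_singleton]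
    constructor
    · rintro ⟨hxD, y, hy, hle⟩
      have : R.le (f x) v := (leRQ x hxD y hy).1 hle
      have : f x = v := hvm _ this
      exact hfB.injOn (by exact_mod_cast (Finset.mem_sdiff.1 hxD).1)
        (by exact_mod_cast hw₀c) (by rw [this, hfw₀])
    · rintro rfl
      obtain ⟨y, hy⟩ := hInonempty
      exact ⟨hw₀D, y, hy, hw₀le y hy⟩
  -- (B) w₀ minimal
  have hw₀min : w₀ ∈ P.minSet := by
    rw [mem_minSet]
    refine ⟨hw₀c, fun z hz => ?_⟩
    have hzc : z ∈ P.carrier := (P.mem_of_le hz).1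
    by_cases hzI : z ∈ I
    · exact absurd hz (leQR z hzI w₀ hw₀D)
    · have hzD : z ∈ P.carrier \ I := Finset.mem_sdiff.2 ⟨hzc, hzI⟩
      have : R.le (f z) (f w₀) := (leRR z hzD w₀ hw₀D).1 hz
      rw [hfw₀] at this
      have : f z = v := hvm _ this
      exact hfB.injOn (by exact_mod_cast hzc) (by exact_mod_cast hw₀c)
        (by rw [this, hfw₀])
  -- (C) IsCC
  have hcc : P.IsCC {x | x ∈ P.carrier ∧ P.lt w₀ x} ↑I := by
    refine ⟨?_, ?_, ?_, ?_⟩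
    · obtain ⟨y, hy⟩ := hInonempty
      exact ⟨y, by exact_mod_cast hy⟩
    · intro y hy
      have hy' : y ∈ I := by exact_mod_cast hy
      exact ⟨hIsub hy', hw₀lt y hy'⟩
    · -- connectivity
      intro x hx y hy
      have hx' : x ∈ I := by exact_mod_cast hx
      have hy' : y ∈ I := by exact_mod_cast hy
      have hchain := hQ.2 (f x) (by exact_mod_cast ((memI x).1 hx').2)
        (f y) (by exact_mod_cast ((memI y).1 hy').2)
      have key : ∀ c, Relation.ReflTransGen
          (fun a b => a ∈ (↑Q.carrier : Set α) ∧ b ∈ (↑Q.carrier : Set α) ∧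
            (Q.le a b ∨ Q.le b a)) (f x) c →
          ∀ z ∈ I, f z = c → Relation.ReflTransGen
            (fun a b => a ∈ (↑I : Set α) ∧ b ∈ (↑I : Set α) ∧
              (P.le a b ∨ P.le b a)) x z := by
        intro c hc
        induction hc with
        | refl =>
          intro z hz hfz
          have : z = x := hfB.injOn (by exact_mod_cast hIsub hz)
            (by exact_mod_cast hIsub hx') hfz
          rw [this]
        | @tail b c hab hbc ih =>
          intro z hz hfz
          obtain ⟨y', hy'c, hfy'⟩ : ∃ y' ∈ I, f y' = b := by
            obtain ⟨x', hx'c, hfx'⟩ := hfB.surjOn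
              (show b ∈ (↑G.carrier : Set α) by
                rw [hGc]
                exact_mod_cast Finset.mem_union_left _ (by exact_mod_cast hbc.1))
            exact ⟨x', (memI x').2 ⟨by exact_mod_cast hx'c,
              by rw [hfx']; exact_mod_cast hbc.1⟩, hfx'⟩
          refine Relation.ReflTransGen.tail (ih y' hy'c hfy') ?_
          refine ⟨by exact_mod_cast hy'c, by exact_mod_cast hz, ?_⟩
          rcases hbc.2.2 with h1 | h1
          · exact Or.inl ((leQQ y' hy'c z hz).2 (by rw [hfy', hfz]; exact h1))
          · exact Or.inr ((leQQ z hz y' hy'c).2 (by rw [hfy', hfz]; exact h1))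
      exact key (f y) hchain y hy' rfl
    · -- closure
      intro x hx y hyS hcomp
      have hx' : x ∈ I := by exact_mod_cast hx
      by_contra hyI
      have hyI' : y ∉ I := fun hh => hyI (by exact_mod_cast hh)
      have hyD : y ∈ P.carrier \ I := Finset.mem_sdiff.2 ⟨hyS.1, hyI'⟩
      rcases hcomp with h1 | h1
      · exact leQR x hx' y hyD h1
      · have : R.le (f y) v := (leRQ y hyD x hx').1 h1
        have : f y = v := hvm _ this
        have : y = w₀ := hfB.injOn (by exact_mod_cast hyS.1)
          (by exact_mod_cast hw₀c) (by rw [this, hfw₀])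
        exact hyS.2.2 this.symm
  have hcircI : I ∈ P.circSet := by
    rw [circSet, Finset.mem_filter, Finset.mem_powerset]
    exact ⟨hIsub, w₀, hbelow, hw₀min, hcc⟩
  have hIc : (P.restrict I).carrier = I := restrict_carrier_of_subset hIsub
  have hDc : (P.restrict (P.carrier \ I)).carrier = P.carrier \ I :=
    restrict_carrier_sdiff P I
  refine ⟨hcircI, ⟨?_, ?_, ?_⟩, ⟨?_, ?_, ?_⟩, ?_⟩
  · -- decG BijOn
    rw [hIc]
    have : Set.EqOn (P.decG Q f) f ↑I := fun x hx => if_pos (by exact_mod_cast hx)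
    refine Set.BijOn.congr ⟨?_, ?_, ?_⟩ this.symm
    · intro x hx
      exact_mod_cast ((memI x).1 (by exact_mod_cast hx)).2
    · exact hfB.injOn.mono (by intro x hx; exact_mod_cast hIsub (by exact_mod_cast hx))
    · intro b hb
      obtain ⟨x, hxc, hfx⟩ := hfB.surjOn
        (show b ∈ (↑G.carrier : Set α) by
          rw [hGc]; exact_mod_cast Finset.mem_union_left _ (by exact_mod_cast hb))
      exact ⟨x, by exact_mod_cast (memI x).2 ⟨by exact_mod_cast hxc,
        by rw [hfx]; exact_mod_cast hb⟩, hfx⟩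
  · -- decG order
    intro x hx y hy
    rw [hIc] at hx hy
    have hgx : P.decG Q f x = f x := if_pos hx
    have hgy : P.decG Q f y = f y := if_pos hy
    rw [hgx, hgy, restrict_le_iff hx hy]
    exact leQQ x hx y hy
  · -- decG identity outside
    intro x hx
    rw [hIc] at hx
    exact if_neg hx
  · -- decH BijOn
    rw [hDc]
    have : Set.EqOn (P.decH Q f) f ↑(P.carrier \ I) :=
      fun x hx => if_pos (by exact_mod_cast hx)
    refine Set.BijOn.congr ⟨?_, ?_, ?_⟩ this.symm
    · intro x hx
      exact_mod_cast fD x (by exact_mod_cast hx)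
    · exact hfB.injOn.mono
        (by intro x hx; exact_mod_cast (Finset.mem_sdiff.1 (by exact_mod_cast hx : x ∈ P.carrier \ I)).1)
    · intro b hb
      obtain ⟨x, hxc, hfx⟩ := hfB.surjOn
        (show b ∈ (↑G.carrier : Set α) by
          rw [hGc]; exact_mod_cast Finset.mem_union_right _ (by exact_mod_cast hb))
      have hxc' : x ∈ P.carrier := by exact_mod_cast hxc
      have hxI : x ∉ I := by
        intro hxI
        have := ((memI x).1 hxI).2
        rw [hfx] at this
        exact Finset.disjoint_left.1 hQR this (by exact_mod_cast hb)
      exact ⟨x, by exact_mod_cast Finset.mem_sdiff.2 ⟨hxc', hxI⟩, hfx⟩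
  · -- decH order
    intro x hx y hy
    rw [hDc] at hx hy
    have hgx : P.decH Q f x = f x := if_pos hx
    have hgy : P.decH Q f y = f y := if_pos hy
    rw [hgx, hgy, restrict_le_iff hx hy]
    exact leRR x hx y hy
  · -- decH identity outside
    intro x hx
    rw [hDc] at hx
    exact if_neg hx
  · -- the w clause
    intro w hw
    have : w = w₀ := by
      rw [hbelow] at hw
      exact (Finset.singleton_injective hw).symm
    rw [this]
    have : P.decH Q f w₀ = f w₀ := if_pos hw₀D
    rw [this, hfw₀]

end Decompose

section Inverses

variable {P Q R : FinPoset α}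

theorem combine_left_inv {I : Finset α} {g h : α → α}
    (hQR : Disjoint Q.carrier R.carrier) (hI : I ⊆ P.carrier)
    (hg : g ∈ (P.restrict I).Isos Q)
    (hh : h ∈ (P.restrict (P.carrier \ I)).Isos R) :
    P.decI Q (P.combineFun I g h) = I ∧
      P.decG Q (P.combineFun I g h) = g ∧ P.decH Q (P.combineFun I g h) = h := by
  have hIc : (P.restrict I).carrier = I := restrict_carrier_of_subset hI
  have hDc : (P.restrict (P.carrier \ I)).carrier = P.carrier \ I :=
    restrict_carrier_sdiff P I
  have hgB : Set.BijOn g ↑I ↑Q.carrier := by have := hg.1; rwa [hIc] at this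
  have hhB : Set.BijOn h ↑(P.carrier \ I) ↑R.carrier := by have := hh.1; rwa [hDc] at this
  have fval_I : ∀ x ∈ I, P.combineFun I g h x = g x := fun x hx => if_pos hx
  have fval_D : ∀ x ∈ P.carrier \ I, P.combineFun I g h x = h x := by
    intro x hx
    obtain ⟨h1, h2⟩ := Finset.mem_sdiff.1 hx
    simp [combineFun, h1, h2]
  have ha : P.decI Q (P.combineFun I g h) = I := by
    ext x
    simp only [decI, Finset.mem_filter]
    constructor
    · rintro ⟨hxc, hfx⟩
      by_contra hxI
      have hxD : x ∈ P.carrier \ I := Finset.mem_sdiff.2 ⟨hxc, hxI⟩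
      rw [fval_D x hxD] at hfx
      exact Finset.disjoint_left.1 hQR hfx (hhB.mapsTo hxD)
    · intro hx
      exact ⟨hI hx, by rw [fval_I x hx]; exact hgB.mapsTo (by exact_mod_cast hx)⟩
  refine ⟨ha, ?_, ?_⟩
  · funext x
    show (if x ∈ P.decI Q (P.combineFun I g h) then P.combineFun I g h x else x) = g x
    rw [ha]
    by_cases hx : x ∈ I
    · rw [if_pos hx, fval_I x hx]
    · rw [if_neg hx]
      exact (hg.2.2 x (by rw [hIc]; exact hx)).symm
  · funext x
    show (if x ∈ P.carrier \ P.decI Q (P.combineFun I g h) then P.combineFun I g h x else x)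
        = h x
    rw [ha]
    by_cases hx : x ∈ P.carrier \ I
    · rw [if_pos hx, fval_D x hx]
    · rw [if_neg hx]
      exact (hh.2.2 x (by rw [hDc]; exact hx)).symm

theorem decompose_right_inv {f : α → α} {v : α}
    (hf : f ∈ P.Isos (Q.graft R v)) :
    P.combineFun (P.decI Q f) (P.decG Q f) (P.decH Q f) = f := by
  funext x
  by_cases hx : x ∈ P.decI Q f
  · show (if x ∈ P.decI Q f then P.decG Q f x else _) = f x
    rw [if_pos hx]
    exact if_pos hx
  · by_cases hxc : x ∈ P.carrier
    · have hxD : x ∈ P.carrier \ P.decI Q f := Finset.mem_sdiff.2 ⟨hxc, hx⟩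
      show (if x ∈ P.decI Q f then _ else if x ∈ P.carrier then P.decH Q f x else x) = f x
      rw [if_neg hx, if_pos hxc]
      exact if_pos hxD
    · show (if x ∈ P.decI Q f then _ else if x ∈ P.carrier then _ else x) = f x
      rw [if_neg hx, if_neg hxc]
      exact (hf.2.2 x hxc).symm

end Inverses

section Counting

variable {P Q R : FinPoset α}

theorem key_count (P Q R : FinPoset α) (hQ : Q.Connected)
    (hQR : Disjoint Q.carrier R.carrier) :
    ∑ I ∈ P.circSet,
        (P.restrict I).pairing Q * (P.restrict (P.carrier \ I)).pairing R
      = ∑ v ∈ R.minSet, P.pairing (Q.graft R v) := by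
  classical
  have circ_of_mem : ∀ {I : Finset α}, I ∈ P.circSet → P.Circ I ∧ I ⊆ P.carrier := by
    intro I hI
    have := Finset.mem_filter.1 hI
    exact ⟨this.2, Finset.mem_powerset.1 this.1⟩
  -- the equivalence of sigma types
  let e : (Σ I : {x // x ∈ P.circSet},
        (↥((P.restrict I.1).Isos Q) × ↥((P.restrict (P.carrier \ I.1)).Isos R)))
      ≃ (Σ v : {x // x ∈ R.minSet}, ↥(P.Isos (Q.graft R v.1))) :=
    { toFun := fun a =>
        ⟨⟨a.2.2.1 (circ_of_mem a.1.2).1.choose,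
            (combine_spec hQR (circ_of_mem a.1.2).2
              (circ_of_mem a.1.2).1.choose_spec.1
              (circ_of_mem a.1.2).1.choose_spec.2.1
              (circ_of_mem a.1.2).1.choose_spec.2.2 a.2.1.2 a.2.2.2).1⟩,
          ⟨P.combineFun a.1.1 a.2.1.1 a.2.2.1,
            (combine_spec hQR (circ_of_mem a.1.2).2
              (circ_of_mem a.1.2).1.choose_spec.1
              (circ_of_mem a.1.2).1.choose_spec.2.1
              (circ_of_mem a.1.2).1.choose_spec.2.2 a.2.1.2 a.2.2.2).2⟩⟩
      invFun := fun b =>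
        ⟨⟨P.decI Q b.2.1, (decompose_spec hQR hQ b.1.2 b.2.2).1⟩,
          ⟨P.decG Q b.2.1, (decompose_spec hQR hQ b.1.2 b.2.2).2.1⟩,
          ⟨P.decH Q b.2.1, (decompose_spec hQR hQ b.1.2 b.2.2).2.2.1⟩⟩
      left_inv := by
        rintro ⟨⟨I, hIc⟩, ⟨g, hg⟩, ⟨h, hh⟩⟩
        obtain ⟨ha, hb, hc⟩ :=
          combine_left_inv (P := P) (I := I) (g := g) (h := h) hQR (circ_of_mem hIc).2 hg hh
        have key : ∀ (J : Finset α) (hJ : J ∈ P.circSet) (g' h' : α → α)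
            (hg' : g' ∈ (P.restrict J).Isos Q)
            (hh' : h' ∈ (P.restrict (P.carrier \ J)).Isos R),
            J = I → g' = g → h' = h →
            (⟨⟨J, hJ⟩, ⟨g', hg'⟩, ⟨h', hh'⟩⟩ :
              Σ I : {x // x ∈ P.circSet},
                (↥((P.restrict I.1).Isos Q) × ↥((P.restrict (P.carrier \ I.1)).Isos R)))
              = ⟨⟨I, hIc⟩, ⟨g, hg⟩, ⟨h, hh⟩⟩ := by
          rintro J hJ g' h' hg' hh' rfl rfl rfl
          rfl
        exact key _ _ _ _ _ _ ha hb hc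
      right_inv := by
        rintro ⟨⟨v, hv⟩, ⟨f, hf⟩⟩
        obtain ⟨h1, h2, h3, h4⟩ := decompose_spec hQR hQ hv hf
        have hfv : P.decH Q f ((circ_of_mem h1).1).choose = v :=
          h4 _ ((circ_of_mem h1).1).choose_spec.1
        have hff : P.combineFun (P.decI Q f) (P.decG Q f) (P.decH Q f) = f :=
          decompose_right_inv hf
        have key : ∀ (u : α) (hu : u ∈ R.minSet) (f' : α → α)
            (hf' : f' ∈ P.Isos (Q.graft R u)),
            u = v → f' = f →
            (⟨⟨u, hu⟩, ⟨f', hf'⟩⟩ :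
              Σ v : {x // x ∈ R.minSet}, ↥(P.Isos (Q.graft R v.1)))
              = ⟨⟨v, hv⟩, ⟨f, hf⟩⟩ := by
          rintro u hu f' hf' rfl rfl
          rfl
        exact key _ _ _ _ hfv hff }
  calc ∑ I ∈ P.circSet,
        (P.restrict I).pairing Q * (P.restrict (P.carrier \ I)).pairing R
      = ∑ I : {x // x ∈ P.circSet},
          Nat.card (↥((P.restrict I.1).Isos Q) × ↥((P.restrict (P.carrier \ I.1)).Isos R)) := by
        rw [← Finset.sum_coe_sort P.circSet]
        exact Finset.sum_congr rfl fun I _ => by rw [Nat.card_prod]; rfl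
    _ = Nat.card (Σ I : {x // x ∈ P.circSet},
          (↥((P.restrict I.1).Isos Q) × ↥((P.restrict (P.carrier \ I.1)).Isos R))) :=
        (mycard_sigma _).symm
    _ = Nat.card (Σ v : {x // x ∈ R.minSet}, ↥(P.Isos (Q.graft R v.1))) := Nat.card_congr e
    _ = ∑ v : {x // x ∈ R.minSet}, Nat.card ↥(P.Isos (Q.graft R v.1)) := mycard_sigma _
    _ = ∑ v ∈ R.minSet, P.pairing (Q.graft R v) := by
        rw [← Finset.sum_coe_sort R.minSet]
        rfl

end Counting

end FinPoset

/-- Duality between the NAP coproduct `δ` and the NAP product `▷`: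
`⟨δ(P), Q ⊗ R⟩ = (1/|min(P)|) ⟨P, Q ▷ R⟩`, in the explicit form
`(1/|min(P)|) Σ_{I ◎ P} ⟨I, Q⟩⟨P \ I, R⟩ = (1/|min(P)|) Σ_{v ∈ min(R)} ⟨P, Q ↘_v R⟩`. -/
theorem delta_pairing {α : Type*} [DecidableEq α] (P Q R : FinPoset α)
    (hP : P.Connected) (hQ : Q.Connected) (hR : R.Connected)
    (hQR : Disjoint Q.carrier R.carrier) :
    ((P.minSet.card : ℚ))⁻¹ * ∑ I ∈ P.circSet,
        (FinPoset.pairing (P.restrict I) Q : ℚ)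
          * (FinPoset.pairing (P.restrict (P.carrier \ I)) R : ℚ)
      = ((P.minSet.card : ℚ))⁻¹ * ∑ v ∈ R.minSet,
        (FinPoset.pairing P (FinPoset.graft Q R v) : ℚ) := by
  congr 1
  exact_mod_cast congrArg (Nat.cast : ℕ → ℚ) (FinPoset.key_count P Q R hQ hQR)
end

section
/- Let Q and R be finite connected posets on disjoint sets and let v ∈ min(R). Let N_v(Q, R) denote the number of subsets I ◎ (Q ↘_v R) with I_- = {v} and I order-isomorphic to Q. Then |{ g ∈ Aut(Q ↘_v R) : g(v) = v }| = |Aut(Q)| · |{ h ∈ Aut(R) : h(v) = v }| · N_v(Q, R). -/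
open scoped Classical

/-! The automorphisms of `P = Q ↘_v R` fixing `v` act on the branches of `P` at `v`, the
`I ◎ P` with `I_- = {v}`. Only `v` lies below a branch and nothing lies above it, so two
disjoint isomorphic branches are exchanged by an involutive automorphism fixing `v`. Hence the
branches isomorphic to `Q` form a single orbit, that of `Q` itself, and orbit–stabilizer gives
`|Aut_v(P)| = N_v(Q, R) · |Stab(Q)|`. An automorphism stabilizing `Q` also stabilizes
`R = P \ Q`, so it is a pair of an automorphism of `Q` and one of `R` fixing `v`. -/

namespace FinPoset

variable {α : Type*}

section

variable {A B C : FinPoset α} {v : α} {f g : α → α}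

/-- `Isos A B` without the condition off the carrier of `A`. -/
def IsoOn (A B : FinPoset α) (f : α → α) : Prop :=
  Set.BijOn f A.carrier B.carrier ∧
    ∀ x ∈ A.carrier, ∀ y ∈ A.carrier, A.le x y ↔ B.le (f x) (f y)

lemma IsoOn.comp (hf : IsoOn B C f) (hg : IsoOn A B g) : IsoOn A C (f ∘ g) :=
  ⟨hf.1.comp hg.1, fun x hx y hy =>
    (hg.2 x hx y hy).trans (hf.2 _ (hg.1.mapsTo hx) _ (hg.1.mapsTo hy))⟩

lemma IsoOn.symm [Nonempty α] (hf : IsoOn A B f) :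
    IsoOn B A (Function.invFunOn f A.carrier) := by
  have hinv := hf.1.invOn_invFunOn
  have hbij := hf.1.symm hinv.symm
  refine ⟨hbij, fun x hx y hy => ?_⟩
  rw [hf.2 _ (hbij.mapsTo hx) _ (hbij.mapsTo hy), hinv.2 hx, hinv.2 hy]

lemma injective_of_mem_isos (hf : f ∈ Isos A A) : Function.Injective f := by
  have hmem : ∀ x, f x ∈ A.carrier ↔ x ∈ A.carrier := fun x =>
    ⟨fun h => by_contra fun hx => hx (hf.2.2 x hx ▸ h), fun h => hf.1.mapsTo h⟩
  intro x y hxy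
  by_cases hx : x ∈ A.carrier
  · have hy : y ∈ A.carrier := (hmem y).1 (hxy ▸ (hmem x).2 hx)
    exact hf.1.injOn hx hy hxy
  · have hy : y ∉ A.carrier := fun hy => hx ((hmem x).1 (hxy ▸ (hmem y).2 hy))
    rwa [hf.2.2 x hx, hf.2.2 y hy] at hxy

lemma comp_mem_isos (hf : f ∈ Isos A A) (hg : g ∈ Isos A A) : f ∘ g ∈ Isos A A := by
  obtain ⟨hbij, hle⟩ := IsoOn.comp (A := A) ⟨hf.1, hf.2.1⟩ ⟨hg.1, hg.2.1⟩
  exact ⟨hbij, hle, fun x hx => by rw [Function.comp_apply, hg.2.2 x hx, hf.2.2 x hx]⟩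

lemma mem_isos_of_involutive (hf : Function.Involutive f)
    (hmaps : Set.MapsTo f A.carrier A.carrier) (hmono : ∀ x y, A.le x y → A.le (f x) (f y))
    (hout : ∀ x ∉ A.carrier, f x = x) : f ∈ Isos A A := by
  refine ⟨⟨hmaps, hf.injective.injOn, fun y hy => ⟨f y, hmaps hy, hf y⟩⟩,
    fun x _ y _ => ⟨hmono x y, fun h => ?_⟩, hout⟩
  simpa only [hf x, hf y] using hmono _ _ h

lemma isCC_image (hf : f ∈ Isos A A) {S I : Set α} (hS : S ⊆ A.carrier) (hI : A.IsCC S I) :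
    A.IsCC (f '' S) (f '' I) := by
  obtain ⟨hne, hIS, hconn, hclosed⟩ := hI
  have hle : ∀ x ∈ I, ∀ y ∈ S, (A.le x y ∨ A.le y x ↔ A.le (f x) (f y) ∨ A.le (f y) (f x)) :=
    fun x hx y hy => or_congr (hf.2.1 x (hS (hIS hx)) y (hS hy)) (hf.2.1 y (hS hy) x (hS (hIS hx)))
  refine ⟨hne.image f, Set.image_mono hIS, ?_, ?_⟩
  · rintro _ ⟨x, hx, rfl⟩ _ ⟨y, hy, rfl⟩
    refine Relation.ReflTransGen.lift f (fun a b ⟨ha, hb, hab⟩ => ?_) x y (hconn x hx y hy)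
    exact ⟨⟨a, ha, rfl⟩, ⟨b, hb, rfl⟩, (hle a ha b (hIS hb)).1 hab⟩
  · rintro _ ⟨x, hx, rfl⟩ _ ⟨y, hy, rfl⟩ hxy
    exact ⟨y, hclosed x hx y hy ((hle x hx y hy).2 hxy), rfl⟩

lemma IsCC.eq_of_mem {S I J : Set α} (hI : A.IsCC S I) (hJ : A.IsCC S J) {z : α}
    (hzI : z ∈ I) (hzJ : z ∈ J) : I = J := by
  have key : ∀ {I J : Set α}, A.IsCC S I → A.IsCC S J → z ∈ I → z ∈ J → I ⊆ J := by
    intro I J hI hJ hzI hzJ x hx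
    have hchain := hI.2.2.1 z hzI x hx
    clear hx
    induction hchain with
    | refl => exact hzJ
    | tail _ hstep ih => exact hJ.2.2.2 _ ih _ (hI.2.1 hstep.2.1) hstep.2.2
  exact (key hI hJ hzI hzJ).antisymm (key hJ hI hzJ hzI)

def autFix (A : FinPoset α) (v : α) : Set (α → α) := {f | f ∈ Isos A A ∧ f v = v}

lemma comp_mem_autFix (hf : f ∈ A.autFix v) (hg : g ∈ A.autFix v) : f ∘ g ∈ A.autFix v :=
  ⟨comp_mem_isos hf.1 hg.1, by rw [Function.comp_apply, hg.2, hf.2]⟩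

end

variable [DecidableEq α]

section

variable {A B : FinPoset α} {f : α → α}

lemma isos_nonempty_iff : (Isos A B).Nonempty ↔ ∃ f, IsoOn A B f := by
  refine ⟨fun ⟨f, hf⟩ => ⟨f, hf.1, hf.2.1⟩, fun ⟨f, hbij, hle⟩ => ?_⟩
  have heq : Set.EqOn f (A.carrier.piecewise f id) A.carrier :=
    fun x hx => (Finset.piecewise_eq_of_mem _ _ _ hx).symm
  refine ⟨A.carrier.piecewise f id, hbij.congr heq, fun x hx y hy => ?_,
    fun x hx => Finset.piecewise_eq_of_notMem _ _ _ hx⟩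
  rw [← heq hx, ← heq hy]
  exact hle x hx y hy

lemma isoOn_restrict_iff {I J : Finset α} (hI : I ⊆ A.carrier) (hJ : J ⊆ A.carrier) :
    IsoOn (A.restrict I) (A.restrict J) f ↔
      Set.BijOn f I J ∧ ∀ x ∈ I, ∀ y ∈ I, A.le x y ↔ A.le (f x) (f y) := by
  have hIc : (A.restrict I).carrier = I := Finset.inter_eq_right.2 hI
  have hJc : (A.restrict J).carrier = J := Finset.inter_eq_right.2 hJ
  unfold IsoOn
  rw [hIc, hJc]
  refine and_congr_right fun hbij => forall₂_congr fun x hx => forall₂_congr fun y hy => ?_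
  have hfx : f x ∈ J := hbij.mapsTo hx
  have hfy : f y ∈ J := hbij.mapsTo hy
  simp only [restrict, hx, hy, hfx, hfy, and_true]

lemma image_carrier_of_mem_isos (hf : f ∈ Isos A A) : A.carrier.image f = A.carrier :=
  Finset.coe_injective (by rw [Finset.coe_image, hf.1.image_eq])

lemma piecewise_mem_isos (hf : f ∈ Isos A A) (hB : B.carrier ⊆ A.carrier)
    (himage : B.carrier.image f = B.carrier)
    (hle : ∀ x ∈ B.carrier, ∀ y ∈ B.carrier, B.le x y ↔ A.le x y) :
    B.carrier.piecewise f id ∈ Isos B B := by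
  have hbij : Set.BijOn f B.carrier B.carrier := by
    have h := (hf.1.injOn.mono (Finset.coe_subset.2 hB)).bijOn_image
    rwa [← Finset.coe_image, himage] at h
  have heq : Set.EqOn f (B.carrier.piecewise f id) B.carrier :=
    fun x hx => (Finset.piecewise_eq_of_mem _ _ _ hx).symm
  refine ⟨hbij.congr heq, fun x hx y hy => ?_, fun x hx => Finset.piecewise_eq_of_notMem _ _ _ hx⟩
  rw [← heq hx, ← heq hy, hle x hx y hy, hf.2.1 x (hB hx) y (hB hy),
    hle _ (hbij.mapsTo hx) _ (hbij.mapsTo hy)]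

lemma isoOn_restrict_image (hf : f ∈ Isos A A) {I : Finset α} (hI : I ⊆ A.carrier) :
    IsoOn (A.restrict I) (A.restrict (I.image f)) f := by
  have hfI : I.image f ⊆ A.carrier := fun y hy => by
    obtain ⟨x, hx, rfl⟩ := Finset.mem_image.1 hy
    exact hf.1.mapsTo (hI hx)
  rw [isoOn_restrict_iff hI hfI, Finset.coe_image]
  exact ⟨(hf.1.injOn.mono (Finset.coe_subset.2 hI)).bijOn_image,
    fun x hx y hy => hf.2.1 x (hI hx) y (hI hy)⟩

lemma below_image (hf : f ∈ Isos A A) {I : Finset α} (hI : I ⊆ A.carrier) :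
    A.below (I.image f) = (A.below I).image f := by
  have hinj := injective_of_mem_isos hf
  ext y
  simp only [below, Finset.mem_image, Finset.mem_filter, Finset.mem_sdiff]
  constructor
  · rintro ⟨⟨hy, hyI⟩, _, ⟨z, hz, rfl⟩, hyz⟩
    obtain ⟨x, hx, rfl⟩ := hf.1.surjOn hy
    exact ⟨x, ⟨⟨hx, fun hxI => hyI ⟨x, hxI, rfl⟩⟩, z, hz,
      (hf.2.1 x hx z (hI hz)).2 hyz⟩, rfl⟩
  · rintro ⟨x, ⟨⟨hx, hxI⟩, z, hz, hxz⟩, rfl⟩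
    exact ⟨⟨hf.1.mapsTo hx, fun ⟨x', hx', h⟩ => hxI (hinj h ▸ hx')⟩, f z, ⟨z, hz, rfl⟩,
      (hf.2.1 x hx z (hI hz)).1 hxz⟩

end

section Branches

variable {A : FinPoset α} {v : α} {I J : Finset α} {f : α → α}

/-- `I ◎ A` with `I_- = {v}`, with the vertex `w` of `I ◎ A` eliminated. -/
structure IsBranch (A : FinPoset α) (v : α) (I : Finset α) : Prop where
  subset_carrier : I ⊆ A.carrier
  below_eq : A.below I = {v}
  mem_minSet : v ∈ A.minSet
  isCC : A.IsCC {x | x ∈ A.carrier ∧ A.lt v x} ↑I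

lemma isBranch_iff : A.IsBranch v I ↔ I ∈ A.circSet ∧ A.below I = {v} := by
  simp only [circSet, Finset.mem_filter, Finset.mem_powerset]
  constructor
  · rintro ⟨hsub, hv, hmin, hcc⟩
    exact ⟨⟨hsub, v, hv, hmin, hcc⟩, hv⟩
  · rintro ⟨⟨hsub, w, hw, hmin, hcc⟩, hv⟩
    obtain rfl : w = v := Finset.singleton_injective (hw.symm.trans hv)
    exact ⟨hsub, hv, hmin, hcc⟩

namespace IsBranch

variable (hI : A.IsBranch v I)
include hI

lemma lt {x : α} (hx : x ∈ I) : A.lt v x := (hI.isCC.2.1 hx).2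

lemma v_notMem : v ∉ I := fun hv => (hI.lt hv).2 rfl

lemma mem_of_le {x y : α} (hx : x ∈ I) (hxy : A.le x y) : y ∈ I := by
  have hvx := hI.lt hx
  refine hI.isCC.2.2.2 x hx y ⟨(A.mem_of_le hxy).2, A.le_trans hvx.1 hxy, ?_⟩ (Or.inl hxy)
  rintro rfl
  exact hvx.2 (A.le_antisymm hvx.1 hxy)

lemma eq_of_le {x y : α} (hx : x ∈ I) (hyx : A.le y x) (hy : y ∉ I) : y = v := by
  have h : y ∈ A.below I :=
    Finset.mem_filter.2 ⟨Finset.mem_sdiff.2 ⟨(A.mem_of_le hyx).1, hy⟩, x, hx, hyx⟩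
  rwa [hI.below_eq, Finset.mem_singleton] at h

lemma eq_or_disjoint (hJ : A.IsBranch v J) : I = J ∨ Disjoint I J := by
  refine or_iff_not_imp_right.2 fun h => ?_
  obtain ⟨z, hzI, hzJ⟩ := Finset.not_disjoint_iff.1 h
  exact Finset.coe_injective (hI.isCC.eq_of_mem hJ.isCC hzI hzJ)

lemma image (hf : f ∈ Isos A A) (hfv : f v = v) : A.IsBranch v (I.image f) := by
  have hinj := injective_of_mem_isos hf
  have hv : v ∈ A.carrier := (Finset.mem_filter.1 hI.mem_minSet).1
  have hS : f '' {x | x ∈ A.carrier ∧ A.lt v x} = {x | x ∈ A.carrier ∧ A.lt v x} := by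
    ext y
    constructor
    · rintro ⟨x, ⟨hx, hvx, hne⟩, rfl⟩
      refine ⟨hf.1.mapsTo hx, ?_, fun h => hne (hinj (hfv.trans h))⟩
      rw [← hfv]
      exact (hf.2.1 v hv x hx).1 hvx
    · rintro ⟨hy, hvy, hne⟩
      obtain ⟨x, hx, rfl⟩ := hf.1.surjOn hy
      refine ⟨x, ⟨hx, ?_, fun h => hne (h ▸ hfv.symm)⟩, rfl⟩
      rw [← hfv] at hvy
      exact (hf.2.1 v hv x hx).2 hvy
  refine ⟨fun y hy => ?_, ?_, hI.mem_minSet, ?_⟩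
  · obtain ⟨x, hx, rfl⟩ := Finset.mem_image.1 hy
    exact hf.1.mapsTo (hI.subset_carrier hx)
  · rw [below_image hf hI.subset_carrier, hI.below_eq, Finset.image_singleton, hfv]
  · rw [Finset.coe_image, ← hS]
    exact isCC_image hf (fun x hx => hx.1) hI.isCC

end IsBranch

end Branches

section Swap

variable [Nonempty α] {A : FinPoset α} {v x : α} {I J : Finset α} {e : α → α}

noncomputable def swapAlong (I J : Finset α) (e : α → α) (x : α) : α :=
  if x ∈ I then e x else if x ∈ J then Function.invFunOn e I x else x

lemma swapAlong_of_mem_left (hx : x ∈ I) : swapAlong I J e x = e x := if_pos hx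

lemma swapAlong_of_mem_right (hIJ : Disjoint I J) (hx : x ∈ J) :
    swapAlong I J e x = Function.invFunOn e I x := by
  rw [swapAlong, if_neg (Finset.disjoint_right.1 hIJ hx), if_pos hx]

lemma swapAlong_of_notMem (hxI : x ∉ I) (hxJ : x ∉ J) : swapAlong I J e x = x := by
  rw [swapAlong, if_neg hxI, if_neg hxJ]

lemma swapAlong_involutive (hIJ : Disjoint I J) (he : Set.BijOn e I J) :
    Function.Involutive (swapAlong I J e) := by
  have hinv := he.invOn_invFunOn
  intro x
  by_cases hxI : x ∈ I
  · rw [swapAlong_of_mem_left hxI, swapAlong_of_mem_right hIJ (he.mapsTo hxI), hinv.1 hxI]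
  by_cases hxJ : x ∈ J
  · rw [swapAlong_of_mem_right hIJ hxJ,
      swapAlong_of_mem_left ((he.symm hinv.symm).mapsTo hxJ), hinv.2 hxJ]
  · rw [swapAlong_of_notMem hxI hxJ, swapAlong_of_notMem hxI hxJ]

lemma image_swapAlong (he : Set.BijOn e I J) : I.image (swapAlong I J e) = J := by
  refine Finset.coe_injective ?_
  rw [Finset.coe_image, ← he.image_eq]
  exact Set.EqOn.image_eq fun x hx => swapAlong_of_mem_left hx

lemma IsBranch.swapAlong_mem_isos (hI : A.IsBranch v I) (hJ : A.IsBranch v J)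
    (hIJ : Disjoint I J) (he : IsoOn (A.restrict I) (A.restrict J) e) :
    swapAlong I J e ∈ Isos A A := by
  obtain ⟨hbij, hle⟩ := (isoOn_restrict_iff hI.subset_carrier hJ.subset_carrier).1 he
  have hinv := hbij.invOn_invFunOn
  have hbij' := hbij.symm hinv.symm
  have hle' : ∀ x ∈ J, ∀ y ∈ J,
      A.le x y ↔ A.le (Function.invFunOn e I x) (Function.invFunOn e I y) :=
    fun x hx y hy => by rw [hle _ (hbij'.mapsTo hx) _ (hbij'.mapsTo hy), hinv.2 hx, hinv.2 hy]
  refine mem_isos_of_involutive (swapAlong_involutive hIJ hbij) (fun x hx => ?_)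
    (fun x y hxy => ?_) (fun x hx => swapAlong_of_notMem (fun h => hx (hI.subset_carrier h))
      (fun h => hx (hJ.subset_carrier h)))
  · by_cases hxI : x ∈ I
    · rw [swapAlong_of_mem_left hxI]
      exact hJ.subset_carrier (hbij.mapsTo hxI)
    by_cases hxJ : x ∈ J
    · rw [swapAlong_of_mem_right hIJ hxJ]
      exact hI.subset_carrier (hbij'.mapsTo hxJ)
    · rwa [swapAlong_of_notMem hxI hxJ]
  by_cases hxI : x ∈ I
  · have hyI := hI.mem_of_le hxI hxy
    rw [swapAlong_of_mem_left hxI, swapAlong_of_mem_left hyI]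
    exact (hle x hxI y hyI).1 hxy
  by_cases hxJ : x ∈ J
  · have hyJ := hJ.mem_of_le hxJ hxy
    rw [swapAlong_of_mem_right hIJ hxJ, swapAlong_of_mem_right hIJ hyJ]
    exact (hle' x hxJ y hyJ).1 hxy
  rw [swapAlong_of_notMem hxI hxJ]
  by_cases hyI : y ∈ I
  · rw [hI.eq_of_le hyI hxy hxI, swapAlong_of_mem_left hyI]
    exact (hJ.lt (hbij.mapsTo hyI)).1
  by_cases hyJ : y ∈ J
  · rw [hJ.eq_of_le hyJ hxy hxJ, swapAlong_of_mem_right hIJ hyJ]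
    exact (hI.lt (hbij'.mapsTo hyJ)).1
  · rwa [swapAlong_of_notMem hyI hyJ]

lemma IsBranch.exists_involutive_image_eq (hI : A.IsBranch v I) (hJ : A.IsBranch v J)
    (he : IsoOn (A.restrict I) (A.restrict J) e) :
    ∃ σ, (σ ∈ Isos A A ∧ σ v = v) ∧ Function.Involutive σ ∧ I.image σ = J := by
  rcases hI.eq_or_disjoint hJ with rfl | hIJ
  · exact ⟨id, ⟨⟨Set.bijOn_id _, fun _ _ _ _ => Iff.rfl, fun _ _ => rfl⟩, rfl⟩,
      fun _ => rfl, Finset.image_id⟩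
  have hbij := ((isoOn_restrict_iff hI.subset_carrier hJ.subset_carrier).1 he).1
  exact ⟨swapAlong I J e, ⟨hI.swapAlong_mem_isos hJ hIJ he,
    swapAlong_of_notMem hI.v_notMem hJ.v_notMem⟩, swapAlong_involutive hIJ hbij,
    image_swapAlong hbij⟩

end Swap

section Count

variable {A T : FinPoset α} {v : α} {B I : Finset α} {σ : α → α}

def imageEqEquivOfInvolutive (hσ : σ ∈ A.autFix v) (hinv : Function.Involutive σ)
    (hσB : B.image σ = I) :
    {f : A.autFix v // B.image f = I} ≃ {f : A.autFix v // B.image f = B} where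
  toFun f := ⟨⟨σ ∘ f.1.1, comp_mem_autFix hσ f.1.2⟩, by
    rw [← Finset.image_image, f.2, ← hσB, Finset.image_image, hinv.comp_self, Finset.image_id]⟩
  invFun f := ⟨⟨σ ∘ f.1.1, comp_mem_autFix hσ f.1.2⟩, by rw [← Finset.image_image, f.2, hσB]⟩
  left_inv f := by ext x; exact hinv _
  right_inv f := by ext x; exact hinv _

theorem card_autFix_eq_mul (hB : A.IsBranch v B) (hBT : (Isos (A.restrict B) T).Nonempty) :
    Nat.card (A.autFix v) = Nat.card {f : A.autFix v // B.image f = B} *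
      (A.circSet.filter (fun I => A.below I = {v} ∧ (Isos (A.restrict I) T).Nonempty)).card := by
  obtain ⟨b, -⟩ := hB.isCC.1
  have : Nonempty α := ⟨b⟩
  set N := A.circSet.filter (fun I => A.below I = {v} ∧ (Isos (A.restrict I) T).Nonempty)
  have mem_N : ∀ I, I ∈ N ↔ A.IsBranch v I ∧ ∃ t, IsoOn (A.restrict I) T t := fun I => by
    rw [Finset.mem_filter, isBranch_iff, and_assoc, isos_nonempty_iff]
  obtain ⟨tB, htB⟩ := isos_nonempty_iff.1 hBT
  have hmem : ∀ f ∈ A.autFix v, B.image f ∈ N := fun f hf => (mem_N _).2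
    ⟨hB.image hf.1 hf.2, _, htB.comp (isoOn_restrict_image hf.1 hB.subset_carrier).symm⟩
  let orbit : A.autFix v → N := fun f => ⟨B.image f, hmem f f.2⟩
  have hswap : ∀ I : N, ∃ σ, σ ∈ A.autFix v ∧ Function.Involutive σ ∧ B.image σ = I := by
    rintro ⟨I, hI⟩
    obtain ⟨hI, tI, htI⟩ := (mem_N I).1 hI
    exact hB.exists_involutive_image_eq hI (htI.symm.comp htB)
  choose σ hσ hinv hσB using hswap
  calc Nat.card (A.autFix v) = Nat.card (Σ I : N, {f // orbit f = I}) :=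
        Nat.card_congr (Equiv.sigmaFiberEquiv orbit).symm
    _ = Nat.card (N × {f : A.autFix v // B.image f = B}) :=
        Nat.card_congr ((Equiv.sigmaCongrRight fun I =>
          (Equiv.subtypeEquivRight fun f => Subtype.ext_iff).trans
            (imageEqEquivOfInvolutive (hσ I) (hinv I) (hσB I))).trans (Equiv.sigmaEquivProd _ _))
    _ = _ := by rw [Nat.card_prod, Nat.card_eq_finsetCard, mul_comm]

end Count

section Graft

variable {Q R : FinPoset α} {v x y : α} (hd : Disjoint Q.carrier R.carrier)
  (hvR : v ∈ R.carrier)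

local notation "P" => Q.graftAux R v hd hvR

lemma graft_eq_s12 : graft Q R v = Q.graftAux R v hd hvR := dif_pos ⟨hd, hvR⟩

lemma graftAux_le_of_mem_left (hx : x ∈ Q.carrier) : (P).le x y ↔ Q.le x y := by
  refine ⟨?_, Or.inl⟩
  rintro (h | h | ⟨h, -⟩)
  · exact h
  all_goals exact absurd (R.mem_of_le h).1 (Finset.disjoint_left.1 hd hx)

lemma graftAux_le_of_mem_right (hy : y ∈ R.carrier) : (P).le x y ↔ R.le x y := by
  refine ⟨?_, fun h => Or.inr (Or.inl h)⟩
  rintro (h | h | ⟨-, h⟩)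
  · exact absurd hy (Finset.disjoint_left.1 hd (Q.mem_of_le h).2)
  · exact h
  · exact absurd hy (Finset.disjoint_left.1 hd h)

lemma graftAux_le_of_mem_right_of_mem_left (hx : x ∈ R.carrier) (hy : y ∈ Q.carrier) :
    (P).le x y ↔ R.le x v := by
  refine ⟨?_, fun h => Or.inr (Or.inr ⟨h, hy⟩)⟩
  rintro (h | h | ⟨h, -⟩)
  · exact absurd hx (Finset.disjoint_left.1 hd (Q.mem_of_le h).1)
  · exact absurd hy (Finset.disjoint_right.1 hd (R.mem_of_le h).2)
  · exact h

lemma isBranch_graftAux (hQ : Q.Connected) (hv : v ∈ R.minSet) : (P).IsBranch v Q.carrier := by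
  have hmin : ∀ y, R.le y v → y = v := (Finset.mem_filter.1 hv).2
  have hvQ : v ∉ Q.carrier := Finset.disjoint_right.1 hd hvR
  have hvle : ∀ x ∈ Q.carrier, (P).le v x := fun x hx => Or.inr (Or.inr ⟨R.le_refl v hvR, hx⟩)
  have hdown : ∀ x ∈ Q.carrier, ∀ y, (P).le y x → y ∉ Q.carrier → y = v := by
    rintro x hx y (h | h | ⟨h, -⟩) hy
    · exact absurd (Q.mem_of_le h).1 hy
    · exact absurd (R.mem_of_le h).2 (Finset.disjoint_left.1 hd hx)
    · exact hmin y h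
  obtain ⟨q, hq⟩ := hQ.1
  refine ⟨Finset.subset_union_left, ?_, ?_, ⟨q, hq⟩,
    fun x hx => ⟨Finset.mem_union_left _ hx, hvle x hx, fun h => hvQ (h ▸ hx)⟩, ?_, ?_⟩
  · ext y
    simp only [below, Finset.mem_filter, Finset.mem_sdiff, Finset.mem_singleton]
    constructor
    · rintro ⟨⟨-, hy⟩, x, hx, hyx⟩
      exact hdown x hx y hyx hy
    · rintro rfl
      exact ⟨⟨Finset.mem_union_right _ hvR, hvQ⟩, q, hq, hvle q hq⟩
  · exact Finset.mem_filter.2 ⟨Finset.mem_union_right _ hvR,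
      fun y hy => hmin y ((graftAux_le_of_mem_right hd hvR hvR).1 hy)⟩
  · refine fun x hx y hy => Relation.ReflTransGen.mono ?_ x y (hQ.2 x hx y hy)
    rintro a b ⟨ha, hb, hab⟩
    exact ⟨ha, hb, hab.imp Or.inl Or.inl⟩
  · rintro x hx y ⟨-, -, hvy⟩ (hxy | hyx)
    · exact (Q.mem_of_le ((graftAux_le_of_mem_left hd hvR hx).1 hxy)).2
    · by_contra hy
      exact hvy (hdown x hx y hyx hy).symm

lemma isos_restrict_graftAux_nonempty : (Isos ((P).restrict Q.carrier) Q).Nonempty := by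
  have hc : ((P).restrict Q.carrier).carrier = Q.carrier := Finset.union_inter_cancel_left
  refine isos_nonempty_iff.2 ⟨id, ?_, fun x hx y hy => ?_⟩
  · rw [hc]
    exact Set.bijOn_id _
  · rw [hc] at hx hy
    exact ⟨fun h => (graftAux_le_of_mem_left hd hvR hx).1 h.1,
      fun h => ⟨(graftAux_le_of_mem_left hd hvR hx).2 h, hx, hy⟩⟩

lemma piecewise_mem_autFix_graftAux {a h : α → α} (ha : a ∈ Isos Q Q) (hh : h ∈ R.autFix v) :
    Q.carrier.piecewise a h ∈ (P).autFix v := by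
  set φ := Q.carrier.piecewise a h
  have hφQ : Set.EqOn a φ Q.carrier := fun x hx => (Finset.piecewise_eq_of_mem _ _ _ hx).symm
  have hφR : Set.EqOn h φ R.carrier := fun x hx =>
    (Finset.piecewise_eq_of_notMem _ _ _ (Finset.disjoint_right.1 hd hx)).symm
  have hbijQ := ha.1.congr hφQ
  have hbijR := hh.1.1.congr hφR
  have hdisj : Disjoint (Q.carrier : Set α) R.carrier := Finset.disjoint_coe.2 hd
  have hinj : Set.InjOn φ (Q.carrier ∪ R.carrier) := by
    rw [Set.injOn_union hdisj]
    exact ⟨hbijQ.injOn, hbijR.injOn, fun x hx y hy hxy =>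
      Finset.disjoint_left.1 hd (hbijQ.mapsTo hx) (hxy ▸ hbijR.mapsTo hy)⟩
  have hbij : Set.BijOn φ (P).carrier (P).carrier := by
    rw [show (P).carrier = Q.carrier ∪ R.carrier from rfl, Finset.coe_union]
    exact hbijQ.union hbijR hinj
  refine ⟨⟨hbij, fun x hx y hy => ?_, fun x hx => ?_⟩, by rw [← hφR hvR, hh.2]⟩
  · rcases Finset.mem_union.1 hx with hxQ | hxR <;> rcases Finset.mem_union.1 hy with hyQ | hyR
    · rw [← hφQ hxQ, ← hφQ hyQ, graftAux_le_of_mem_left hd hvR hxQ,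
        graftAux_le_of_mem_left hd hvR (ha.1.mapsTo hxQ)]
      exact ha.2.1 x hxQ y hyQ
    · rw [← hφQ hxQ, ← hφR hyR, graftAux_le_of_mem_right hd hvR hyR,
        graftAux_le_of_mem_right hd hvR (hh.1.1.mapsTo hyR)]
      exact iff_of_false (fun h => Finset.disjoint_left.1 hd hxQ (R.mem_of_le h).1)
        (fun h => Finset.disjoint_left.1 hd (ha.1.mapsTo hxQ) (R.mem_of_le h).1)
    · rw [← hφR hxR, ← hφQ hyQ, graftAux_le_of_mem_right_of_mem_left hd hvR hxR hyQ,
        graftAux_le_of_mem_right_of_mem_left hd hvR (hh.1.1.mapsTo hxR) (ha.1.mapsTo hyQ)]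
      conv_rhs => rw [← hh.2]
      exact hh.1.2.1 x hxR v hvR
    · rw [← hφR hxR, ← hφR hyR, graftAux_le_of_mem_right hd hvR hyR,
        graftAux_le_of_mem_right hd hvR (hh.1.1.mapsTo hyR)]
      exact hh.1.2.1 x hxR y hyR
  · obtain ⟨hxQ, hxR⟩ := Finset.notMem_union.1 hx
    exact (Finset.piecewise_eq_of_notMem _ _ _ hxQ).trans (hh.1.2.2 x hxR)

lemma image_right_eq_of_image_left_eq {g : α → α} (hg : g ∈ Isos P P)
    (himage : Q.carrier.image g = Q.carrier) : R.carrier.image g = R.carrier := by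
  have hcarrier : (Q.carrier ∪ R.carrier).image g = Q.carrier ∪ R.carrier :=
    image_carrier_of_mem_isos hg
  rw [← Finset.union_sdiff_cancel_left hd, Finset.image_sdiff _ _ (injective_of_mem_isos hg),
    hcarrier, himage]

def autFixImageEqEquiv :
    {f : (P).autFix v // Q.carrier.image f = Q.carrier} ≃ Isos Q Q × R.autFix v where
  toFun f := (⟨Q.carrier.piecewise f.1.1 id, piecewise_mem_isos f.1.2.1 Finset.subset_union_left
      f.2 fun x hx _ _ => (graftAux_le_of_mem_left hd hvR hx).symm⟩,
    ⟨R.carrier.piecewise f.1.1 id, piecewise_mem_isos f.1.2.1 Finset.subset_union_right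
      (image_right_eq_of_image_left_eq hd hvR f.1.2.1 f.2)
      fun _ _ _ hy => (graftAux_le_of_mem_right hd hvR hy).symm,
      (Finset.piecewise_eq_of_mem _ _ _ hvR).trans f.1.2.2⟩)
  invFun p := ⟨⟨Q.carrier.piecewise p.1.1 p.2.1, piecewise_mem_autFix_graftAux hd hvR p.1.2 p.2.2⟩,
    by
      change Q.carrier.image (Q.carrier.piecewise p.1.1 p.2.1) = Q.carrier
      rw [Finset.image_congr (g := p.1.1) fun _ hx => Finset.piecewise_eq_of_mem _ _ _ hx]
      exact image_carrier_of_mem_isos p.1.2⟩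
  left_inv f := by
    refine Subtype.ext (Subtype.ext (funext fun x => ?_))
    by_cases hxQ : x ∈ Q.carrier
    · simp [hxQ]
    by_cases hxR : x ∈ R.carrier
    · simp [hxQ, hxR]
    · simp [hxQ, hxR, f.1.2.1.2.2 x (Finset.notMem_union.2 ⟨hxQ, hxR⟩)]
  right_inv p := by
    refine Prod.ext (Subtype.ext (funext fun x => ?_)) (Subtype.ext (funext fun x => ?_))
    · by_cases hxQ : x ∈ Q.carrier
      · simp [hxQ]
      · simp [hxQ, p.1.2.2.2 x hxQ]
    · by_cases hxR : x ∈ R.carrier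
      · simp [hxR, Finset.disjoint_right.1 hd hxR]
      · simp [hxR, p.2.2.1.2.2 x hxR]

end Graft

end FinPoset

theorem stabilizer_card_graft_general {α : Type*} [DecidableEq α] (Q R : FinPoset α)
    (hQ : Q.Connected) (hd : Disjoint Q.carrier R.carrier)
    (v : α) (hv : v ∈ R.minSet) :
    Nat.card {f : α → α //
        f ∈ FinPoset.Isos (FinPoset.graft Q R v) (FinPoset.graft Q R v) ∧ f v = v}
      = FinPoset.pairing Q Q
        * Nat.card {h : α → α // h ∈ FinPoset.Isos R R ∧ h v = v}
        * ((FinPoset.graft Q R v).circSet.filter (fun I =>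
            (FinPoset.graft Q R v).below I = {v} ∧
              (FinPoset.Isos ((FinPoset.graft Q R v).restrict I) Q).Nonempty)).card := by
  have hvR : v ∈ R.carrier := (Finset.mem_filter.1 hv).1
  rw [FinPoset.graft_eq_s12 hd hvR]
  refine (FinPoset.card_autFix_eq_mul (FinPoset.isBranch_graftAux hd hvR hQ hv)
    (FinPoset.isos_restrict_graftAux_nonempty hd hvR)).trans ?_
  rw [Nat.card_congr (FinPoset.autFixImageEqEquiv hd hvR), Nat.card_prod]
  rfl

/-- For finite connected posets `Q`, `R` on disjoint sets and
`v ∈ min(R)`, with `N_v(Q,R)` the number of `I ◎ (Q ↘_v R)` with `I_- = {v}` and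
`I ≅ Q`, one has `|Aut_v(Q ↘_v R)| = |Aut(Q)| ⬝ |Aut_v(R)| ⬝ N_v(Q,R)`, where `Aut_v`
denotes the automorphisms fixing `v`. -/
theorem stabilizer_card_graft {α : Type*} [DecidableEq α] (Q R : FinPoset α)
    (hQ : Q.Connected) (hR : R.Connected) (hd : Disjoint Q.carrier R.carrier)
    (v : α) (hv : v ∈ R.minSet) :
    Nat.card {f : α → α //
        f ∈ FinPoset.Isos (FinPoset.graft Q R v) (FinPoset.graft Q R v) ∧ f v = v}
      = FinPoset.pairing Q Q
        * Nat.card {h : α → α // h ∈ FinPoset.Isos R R ∧ h v = v}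
        * ((FinPoset.graft Q R v).circSet.filter (fun I =>
            (FinPoset.graft Q R v).below I = {v} ∧
              (FinPoset.Isos ((FinPoset.graft Q R v).restrict I) Q).Nonempty)).card :=
  stabilizer_card_graft_general Q R hQ hd v hv
end

section
/- Let T be a finite connected preorder on a set X and let Y, Z ⊆ X satisfy Y ◎ T and Z ◎ T. Then: (i) Y = Z or Y ∩ Z = ∅; (ii) the set of minimal elements of the restricted preorder T|_{X\Y} equals min(T); and (iii) the restricted preorder T|_{X\Y} is connected. -/
open scoped Classical

/-- A finite preorder (quasi-order, i.e. finite topological space) on a subset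
(`carrier`) of an ambient type `α`. -/
structure FinPre (α : Type*) where
  carrier : Finset α
  le : α → α → Prop
  mem_of_le : ∀ ⦃x y⦄, le x y → x ∈ carrier ∧ y ∈ carrier
  le_refl : ∀ x ∈ carrier, le x x
  le_trans : ∀ ⦃x y z⦄, le x y → le y z → le x z

namespace FinPre

variable {α : Type*} [DecidableEq α]

/-- The strict relation `x < y`, i.e. `x ≤ y` and not `y ≤ x`. -/
def lt (T : FinPre α) (x y : α) : Prop := T.le x y ∧ ¬ T.le y x

/-- The equivalence `x ~ y` iff `x ≤ y` and `y ≤ x`. -/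
def equiv (T : FinPre α) (x y : α) : Prop := T.le x y ∧ T.le y x

/-- The bag (equivalence class) of a vertex `v`. -/
noncomputable def bag (T : FinPre α) (v : α) : Finset α :=
  T.carrier.filter (fun x => T.equiv x v)

/-- `min(T)`: the set of minimal elements (`y ≤ x` implies `x ≤ y`). -/
noncomputable def minSet (T : FinPre α) : Finset α :=
  T.carrier.filter (fun x => ∀ y, T.le y x → T.le x y)

/-- Connectivity of a subset `S`, for the graph with edges between comparable pairs. -/
def ConnOn (T : FinPre α) (S : Set α) : Prop :=
  ∀ x ∈ S, ∀ y ∈ S,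
    Relation.ReflTransGen (fun a b => a ∈ S ∧ b ∈ S ∧ (T.le a b ∨ T.le b a)) x y

/-- A finite preorder is connected if it is nonempty and any two elements are linked by
a chain of comparable pairs. -/
def Connected (T : FinPre α) : Prop :=
  T.carrier.Nonempty ∧ T.ConnOn ↑T.carrier

/-- `I` is a connected component of `S` (for the comparability graph of `T`). -/
def IsCC (T : FinPre α) (S I : Set α) : Prop :=
  I.Nonempty ∧ I ⊆ S ∧ T.ConnOn I ∧
    ∀ x ∈ I, ∀ y ∈ S, (T.le x y ∨ T.le y x) → y ∈ I

/-- `Y_- = {x ∉ Y : ∃ y ∈ Y, x ≤ y}`. -/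
noncomputable def below (T : FinPre α) (Y : Finset α) : Finset α :=
  (T.carrier \ Y).filter (fun x => ∃ y ∈ Y, T.le x y)

/-- `Y ◎ T` : `Y` is an upper (open) set, the image of `Y_-` in the quotient poset `T̄`
is a single bag belonging to `min(T̄)` (i.e. `Y_-` is nonempty, contained in the bag of
some minimal `w`), and `Y` is a connected component of
`{x : y < x for all y ∈ Y_-}`. -/
def Circ (T : FinPre α) (Y : Finset α) : Prop :=
  (∀ x ∈ Y, ∀ z, T.le x z → z ∈ Y) ∧
  ∃ w ∈ T.below Y, w ∈ T.minSet ∧ (∀ x ∈ T.below Y, T.equiv x w) ∧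
    T.IsCC {x | x ∈ T.carrier ∧ ∀ y ∈ T.below Y, T.lt y x} ↑Y

/-- The induced (restricted) preorder on a subset `S`. -/
def restrict (T : FinPre α) (S : Finset α) : FinPre α where
  carrier := T.carrier ∩ S
  le x y := T.le x y ∧ x ∈ S ∧ y ∈ S
  mem_of_le := by
    intro x y h
    rcases T.mem_of_le h.1 with ⟨hx, hy⟩
    exact ⟨Finset.mem_inter.2 ⟨hx, h.2.1⟩, Finset.mem_inter.2 ⟨hy, h.2.2⟩⟩
  le_refl := by
    intro x hx
    rcases Finset.mem_inter.1 hx with ⟨h1, h2⟩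
    exact ⟨T.le_refl x h1, h2, h2⟩
  le_trans := by
    rintro x y z ⟨h1, hx, hy⟩ ⟨h2, _, hz⟩
    exact ⟨T.le_trans h1 h2, hx, hz⟩

/-- The grafting `T' ↘_v T''` of `T'` above the vertex `v` of `T''` (auxiliary version,
with the disjointness hypotheses as arguments). -/
def graftAux (T' T'' : FinPre α) (v : α) (hd : Disjoint T'.carrier T''.carrier)
    (hv : v ∈ T''.carrier) : FinPre α where
  carrier := T'.carrier ∪ T''.carrier
  le x y := T'.le x y ∨ T''.le x y ∨ (T''.le x v ∧ y ∈ T'.carrier)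
  mem_of_le := by
    rintro x y (h | h | ⟨h1, h2⟩)
    · rcases T'.mem_of_le h with ⟨hx, hy⟩
      exact ⟨Finset.mem_union_left _ hx, Finset.mem_union_left _ hy⟩
    · rcases T''.mem_of_le h with ⟨hx, hy⟩
      exact ⟨Finset.mem_union_right _ hx, Finset.mem_union_right _ hy⟩
    · exact ⟨Finset.mem_union_right _ (T''.mem_of_le h1).1, Finset.mem_union_left _ h2⟩
  le_refl := by
    intro x hx
    rcases Finset.mem_union.1 hx with h | h
    · exact Or.inl (T'.le_refl x h)
    · exact Or.inr (Or.inl (T''.le_refl x h))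
  le_trans := by
    rintro x y z (h1 | h1 | ⟨h1, h1'⟩) (h2 | h2 | ⟨h2, h2'⟩)
    · exact Or.inl (T'.le_trans h1 h2)
    · exact absurd (T''.mem_of_le h2).1 (Finset.disjoint_left.1 hd (T'.mem_of_le h1).2)
    · exact absurd (T''.mem_of_le h2).1 (Finset.disjoint_left.1 hd (T'.mem_of_le h1).2)
    · exact absurd (T'.mem_of_le h2).1 (Finset.disjoint_right.1 hd (T''.mem_of_le h1).2)
    · exact Or.inr (Or.inl (T''.le_trans h1 h2))
    · exact Or.inr (Or.inr ⟨T''.le_trans h1 h2, h2'⟩)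
    · exact Or.inr (Or.inr ⟨h1, (T'.mem_of_le h2).2⟩)
    · exact absurd (T''.mem_of_le h2).1 (Finset.disjoint_left.1 hd h1')
    · exact absurd (T''.mem_of_le h2).1 (Finset.disjoint_left.1 hd h1')

/-- The grafting `T' ↘_v T''` of `T'` above the vertex `v` of `T''`: the preorder on
`X₁ ⊔ X₂` restricting to `T'` on `X₁` and to `T''` on `X₂`, with `q ≤ p` for `q ∈ X₂`,
`p ∈ X₁` iff `q ≤_{T''} v`.  (Junk value when the carriers are not disjoint or
`v ∉ T''`.) -/
noncomputable def graft (T' T'' : FinPre α) (v : α) : FinPre α :=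
  if h : Disjoint T'.carrier T''.carrier ∧ v ∈ T''.carrier then
    T'.graftAux T'' v h.1 h.2 else T'

/-- The set of subsets `Y` of the carrier with `Y ◎ T`. -/
noncomputable def circSet (T : FinPre α) : Finset (Finset α) :=
  T.carrier.powerset.filter (fun Y => T.Circ Y)

/-- Isomorphisms from `A` to `B` (bijections order-preserving in both directions),
encoded as maps `α → α` that are the identity outside of the carrier of `A`. -/
def Isos (A B : FinPre α) : Set (α → α) :=
  {f | Set.BijOn f ↑A.carrier ↑B.carrier ∧
    (∀ x ∈ A.carrier, ∀ y ∈ A.carrier, (A.le x y ↔ B.le (f x) (f y))) ∧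
    ∀ x, x ∉ A.carrier → f x = x}

/-- `⟨A, B⟩`: the number of isomorphisms from `A` to `B`. -/
noncomputable def pairing (A B : FinPre α) : ℕ := Nat.card ↥(Isos A B)

/-- The NAP coproduct `δ(T) = (1/|min(T)|) Σ_{Y ◎ T} T|_Y ⊗ T|_{X \ Y}`, with values
in the rational vector space spanned by pairs of finite preorders. -/
noncomputable def delta (T : FinPre α) : (FinPre α × FinPre α) →₀ ℚ :=
  ((T.minSet.card : ℚ))⁻¹ • ∑ Y ∈ T.circSet,
    Finsupp.single (T.restrict Y, T.restrict (T.carrier \ Y)) (1 : ℚ)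

end FinPre

namespace FinPre

variable {α : Type*} [DecidableEq α] (T : FinPre α)

lemma mem_below_iff {Y : Finset α} {a : α} :
    a ∈ T.below Y ↔ a ∈ T.carrier ∧ a ∉ Y ∧ ∃ y ∈ Y, T.le a y := by
  simp [below, Finset.mem_filter, Finset.mem_sdiff, and_assoc]

lemma circ_strict {Y : Finset α} (hYc : T.Circ Y) {x a : α} (hx : x ∈ Y)
    (ha : a ∈ T.below Y) : T.lt a x := by
  obtain ⟨-, w, -, -, -, hcc⟩ := hYc
  exact (hcc.2.1 (Finset.mem_coe.2 hx)).2 a ha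

/-- The minimal witness of `Circ Y` is not in `Z` when there is a common point. -/
lemma below_subset_below {Y Z : Finset α} (hYc : T.Circ Y) (hZc : T.Circ Z)
    {x0 : α} (h0Y : x0 ∈ Y) (h0Z : x0 ∈ Z) : T.below Y ⊆ T.below Z := by
  obtain ⟨-, wY, hwYb, hwYmin, hwYeq, -⟩ := id hYc
  obtain ⟨-, wZ, hwZb, hwZmin, hwZeq, -⟩ := id hZc
  -- wY ∉ Z
  have hwYcar : wY ∈ T.carrier := ((T.mem_below_iff).1 hwYb).1
  have hwYZ : wY ∉ Z := by
    intro h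
    have hlt := T.circ_strict hZc h hwZb
    exact hlt.2 ((Finset.mem_filter.1 hwYmin).2 wZ hlt.1)
  -- wY ≤ x0, so wY ∈ below Z, hence wY ~ wZ
  have hwYx0 : T.le wY x0 := (T.circ_strict hYc h0Y hwYb).1
  have hwYbZ : wY ∈ T.below Z := (T.mem_below_iff).2 ⟨hwYcar, hwYZ, x0, h0Z, hwYx0⟩
  have hYZeq : T.equiv wY wZ := hwZeq wY hwYbZ
  intro a ha
  have haeq : T.equiv a wY := hwYeq a ha
  have haZeq : T.equiv a wZ :=
    ⟨T.le_trans haeq.1 hYZeq.1, T.le_trans hYZeq.2 haeq.2⟩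
  have hacar : a ∈ T.carrier := ((T.mem_below_iff).1 ha).1
  have haZ : a ∉ Z := by
    intro h
    exact (T.circ_strict hZc h hwZb).2 haZeq.1
  exact (T.mem_below_iff).2 ⟨hacar, haZ, x0, h0Z, T.le_trans haeq.1 hwYx0⟩

lemma circ_subset {Y Z : Finset α} (hYc : T.Circ Y) (hZc : T.Circ Z)
    (hb : T.below Z = T.below Y) {x0 : α} (h0Y : x0 ∈ Y) (h0Z : x0 ∈ Z) : Z ⊆ Y := by
  obtain ⟨-, wY, hwYb, hwYmin, hwYeq, hccY⟩ := id hYc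
  obtain ⟨-, wZ, hwZb, hwZmin, hwZeq, hccZ⟩ := id hZc
  intro z hz
  have hpath := hccZ.2.2.1 x0 (Finset.mem_coe.2 h0Z) z (Finset.mem_coe.2 hz)
  clear hz
  induction hpath with
  | refl => exact h0Y
  | tail _ hstep ih =>
    rename_i b c _
    obtain ⟨hbZ, hcZ, hcomp⟩ := hstep
    have hcS : c ∈ {x | x ∈ T.carrier ∧ ∀ y ∈ T.below Y, T.lt y x} := by
      have := hccZ.2.1 hcZ
      exact ⟨this.1, fun y hy => this.2 y (hb ▸ hy)⟩
    exact hccY.2.2.2 b ih c hcS hcomp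

end FinPre

/-- For a finite connected preorder `T` on `X` and `Y ◎ T`, `Z ◎ T`:
(i) `Y = Z` or `Y ∩ Z = ∅`; (ii) `min(T|_{X\Y}) = min(T)`; (iii) `T|_{X\Y}` is
connected. -/
theorem circ_preorder_properties {α : Type*} [DecidableEq α] (T : FinPre α)
    (hT : T.Connected) (Y Z : Finset α) (hY : Y ⊆ T.carrier) (hZ : Z ⊆ T.carrier)
    (hYc : T.Circ Y) (hZc : T.Circ Z) :
    (Y = Z ∨ Y ∩ Z = ∅)
      ∧ (T.restrict (T.carrier \ Y)).minSet = T.minSet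
      ∧ (T.restrict (T.carrier \ Y)).Connected := by
  obtain ⟨hTne, hTconn⟩ := hT
  obtain ⟨hupY, wY, hwYb, hwYmin, hwYeq, hccY⟩ := id hYc
  have hwYmem := (T.mem_below_iff).1 hwYb
  refine ⟨?_, ?_, ?_⟩
  · by_cases h : (Y ∩ Z).Nonempty
    · left
      obtain ⟨x0, hx0⟩ := h
      rw [Finset.mem_inter] at hx0
      have h1 := T.below_subset_below hYc hZc hx0.1 hx0.2
      have h2 := T.below_subset_below hZc hYc hx0.2 hx0.1
      have hb : T.below Z = T.below Y := Finset.Subset.antisymm h2 h1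
      exact Finset.Subset.antisymm
        (T.circ_subset hZc hYc hb.symm hx0.2 hx0.1)
        (T.circ_subset hYc hZc hb hx0.1 hx0.2)
    · exact Or.inr (Finset.not_nonempty_iff_eq_empty.1 h)
  · ext a
    simp only [FinPre.minSet, FinPre.restrict, Finset.mem_filter, Finset.mem_inter,
      Finset.mem_sdiff]
    constructor
    · rintro ⟨⟨hacar, -, haY⟩, hmin⟩
      refine ⟨hacar, fun y hy => ?_⟩
      have hycar := (T.mem_of_le hy).1
      have hyY : y ∉ Y := fun hyY => haY (hupY y hyY a hy)
      exact (hmin y ⟨hy, ⟨hycar, hyY⟩, ⟨hacar, haY⟩⟩).1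
    · rintro ⟨hacar, hmin⟩
      have haY : a ∉ Y := by
        intro hh
        have hlt := T.circ_strict hYc hh hwYb
        exact hlt.2 (hmin wY hlt.1)
      exact ⟨⟨hacar, hacar, haY⟩, fun y hy => ⟨hmin y hy.1, hy.2.2, hy.2.1⟩⟩
  · have hmemS : ∀ t, t ∈ T.carrier → t ∉ Y →
        t ∈ (↑(T.restrict (T.carrier \ Y)).carrier : Set α) := by
      intro t ht htY
      show t ∈ (↑(T.carrier ∩ (T.carrier \ Y)) : Set α)
      exact Finset.mem_coe.2 (Finset.mem_inter.2 ⟨ht, Finset.mem_sdiff.2 ⟨ht, htY⟩⟩)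
    constructor
    · exact ⟨wY, by
        have := hmemS wY hwYmem.1 hwYmem.2.1
        exact_mod_cast this⟩
    · intro x hx y hy
      set T' := T.restrict (T.carrier \ Y) with hT'
      set R : α → α → Prop := fun a b =>
        a ∈ (↑T'.carrier : Set α) ∧ b ∈ (↑T'.carrier : Set α) ∧
          (T'.le a b ∨ T'.le b a) with hR
      have hedge : ∀ a b, a ∈ T.carrier → a ∉ Y → b ∈ T.carrier → b ∉ Y →
          (T.le a b ∨ T.le b a) → R a b := by
        intro a b ha haY hb hbY hc
        refine ⟨hmemS a ha haY, hmemS b hb hbY, ?_⟩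
        have hamem : a ∈ T.carrier \ Y := Finset.mem_sdiff.2 ⟨ha, haY⟩
        have hbmem : b ∈ T.carrier \ Y := Finset.mem_sdiff.2 ⟨hb, hbY⟩
        rcases hc with hc | hc
        · exact Or.inl ⟨hc, hamem, hbmem⟩
        · exact Or.inr ⟨hc, hbmem, hamem⟩
      set f : α → α := fun t => if t ∈ Y then wY else t with hf
      have hfstep : ∀ a b,
          (a ∈ (↑T.carrier : Set α) ∧ b ∈ (↑T.carrier : Set α) ∧
            (T.le a b ∨ T.le b a)) →
          Relation.ReflTransGen R (f a) (f b) := by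
        rintro a b ⟨ha, hb, hc⟩
        have ha' : a ∈ T.carrier := ha
        have hb' : b ∈ T.carrier := hb
        by_cases haY : a ∈ Y <;> by_cases hbY : b ∈ Y
        · simp only [hf, if_pos haY, if_pos hbY]
          exact Relation.ReflTransGen.refl
        · -- a ∈ Y, b ∉ Y : then T.le b a (else b ∈ Y), so b ∈ below Y, b ~ wY
          simp only [hf, if_pos haY, if_neg hbY]
          have hba : T.le b a := by
            rcases hc with hc | hc
            · exact absurd (hupY a haY b hc) hbY
            · exact hc
          have hbbelow : b ∈ T.below Y := (T.mem_below_iff).2 ⟨hb', hbY, a, haY, hba⟩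
          have heq := hwYeq b hbbelow
          exact Relation.ReflTransGen.single
            (hedge wY b hwYmem.1 hwYmem.2.1 hb' hbY (Or.inr heq.1))
        · -- a ∉ Y, b ∈ Y
          simp only [hf, if_neg haY, if_pos hbY]
          have hab : T.le a b := by
            rcases hc with hc | hc
            · exact hc
            · exact absurd (hupY b hbY a hc) haY
          have habelow : a ∈ T.below Y := (T.mem_below_iff).2 ⟨ha', haY, b, hbY, hab⟩
          have heq := hwYeq a habelow
          exact Relation.ReflTransGen.single
            (hedge a wY ha' haY hwYmem.1 hwYmem.2.1 (Or.inl heq.1))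
        · simp only [hf, if_neg haY, if_neg hbY]
          exact Relation.ReflTransGen.single (hedge a b ha' haY hb' hbY hc)
      have hlift : ∀ {p q : α},
          Relation.ReflTransGen (fun a b => a ∈ (↑T.carrier : Set α) ∧
            b ∈ (↑T.carrier : Set α) ∧ (T.le a b ∨ T.le b a)) p q →
          Relation.ReflTransGen R (f p) (f q) := by
        intro p q h
        induction h with
        | refl => exact Relation.ReflTransGen.refl
        | tail _ hstep ih => exact ih.trans (hfstep _ _ hstep)
      have hx'' : x ∈ T.carrier ∩ (T.carrier \ Y) := Finset.mem_coe.1 hx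
      have hy'' : y ∈ T.carrier ∩ (T.carrier \ Y) := Finset.mem_coe.1 hy
      have hx' : x ∈ T.carrier ∧ x ∉ Y := by
        rcases Finset.mem_inter.1 hx'' with ⟨h1, h2⟩
        exact ⟨h1, (Finset.mem_sdiff.1 h2).2⟩
      have hy' : y ∈ T.carrier ∧ y ∉ Y := by
        rcases Finset.mem_inter.1 hy'' with ⟨h1, h2⟩
        exact ⟨h1, (Finset.mem_sdiff.1 h2).2⟩
      have hpath := hTconn x (Finset.mem_coe.2 hx'.1) y (Finset.mem_coe.2 hy'.1)
      have := hlift hpath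
      simpa only [hf, if_neg hx'.2, if_neg hy'.2] using this
end

section
/- For every finite connected preorder T, the coproduct δ satisfies the left non-coassociative permutative (NAP) identity (id ⊗ δ)∘δ (T) = τ¹²∘(id ⊗ δ)∘δ (T), where τ¹² swaps the first two tensor factors; explicitly, the element (1/|min(T)|) Σ_{Y ◎ T} (1/|min(T|_{X\Y})|) Σ_{Z ◎ T|_{X\Y}} T|_Y ⊗ T|_Z ⊗ T|_{X\(Y∪Z)} is invariant under exchanging the first two tensor factors. -/
open scoped Classical

/-!
If `Y ◎ T`, then `Y` contains no minimal element of `T`, so `T|_{X∖Y}` has the same minimal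
elements as `T` and both normalising factors are `1/|min(T)|`. The identity thus reduces to the
symmetry in `Y` and `Z` of the relation "`Y ◎ T` and `Z ◎ T|_{X∖Y}`". Whether `Y ◎ ·` holds only
depends on `Y` and the elements directly below and above it, and cutting along one of `Y`, `Z`
leaves these untouched for the other.
-/

namespace FinPre

lemma ext {α : Type*} {A B : FinPre α} (hc : A.carrier = B.carrier)
    (hle : ∀ x y, A.le x y ↔ B.le x y) : A = B := by
  obtain ⟨c, l, _, _, _⟩ := A
  obtain ⟨c', l', _, _, _⟩ := B
  obtain rfl : c = c' := hc
  obtain rfl : l = l' := funext fun x => funext fun y => propext (hle x y)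
  rfl

variable {α : Type*} [DecidableEq α] {T : FinPre α} {S Y Z : Finset α} {x y w : α}

lemma mem_restrict_carrier : x ∈ (T.restrict S).carrier ↔ x ∈ T.carrier ∧ x ∈ S :=
  Finset.mem_inter

lemma restrict_le : (T.restrict S).le x y ↔ T.le x y ∧ x ∈ S ∧ y ∈ S := Iff.rfl

lemma restrict_lt_iff (hx : x ∈ S) (hy : y ∈ S) : (T.restrict S).lt x y ↔ T.lt x y :=
  ⟨fun ⟨h, hn⟩ => ⟨h.1, fun h' => hn ⟨h', hy, hx⟩⟩, fun ⟨h, hn⟩ => ⟨⟨h, hx, hy⟩, fun h' => hn h'.1⟩⟩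

lemma restrict_equiv_iff (hx : x ∈ S) (hy : y ∈ S) : (T.restrict S).equiv x y ↔ T.equiv x y :=
  ⟨fun ⟨h, h'⟩ => ⟨h.1, h'.1⟩, fun ⟨h, h'⟩ => ⟨⟨h, hx, hy⟩, ⟨h', hy, hx⟩⟩⟩

lemma restrict_restrict (T : FinPre α) (S S' : Finset α) :
    (T.restrict S).restrict S' = T.restrict (S ∩ S') := by
  refine ext (Finset.inter_assoc _ _ _) fun x y => ?_
  simp only [restrict_le, Finset.mem_inter]
  tauto

lemma connOn_restrict_iff {I : Set α} (h : I ⊆ S) : (T.restrict S).ConnOn I ↔ T.ConnOn I := by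
  have hrel : (fun a b => a ∈ I ∧ b ∈ I ∧ ((T.restrict S).le a b ∨ (T.restrict S).le b a)) =
      fun a b => a ∈ I ∧ b ∈ I ∧ (T.le a b ∨ T.le b a) := by
    ext a b
    constructor
    · rintro ⟨ha, hb, hab⟩
      exact ⟨ha, hb, hab.imp And.left And.left⟩
    · rintro ⟨ha, hb, hab⟩
      exact ⟨ha, hb, hab.imp (fun h' => ⟨h', h ha, h hb⟩) (fun h' => ⟨h', h hb, h ha⟩)⟩
  simp only [ConnOn, hrel]

lemma mem_minSet_restrict_iff (hw : w ∈ S) (hdown : ∀ y, T.le y w → y ∈ S) :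
    w ∈ (T.restrict S).minSet ↔ w ∈ T.minSet := by
  simp only [minSet, Finset.mem_filter, mem_restrict_carrier, restrict_le, and_iff_left hw]
  exact and_congr_right fun _ =>
    ⟨fun h y hyw => (h y ⟨hyw, hdown y hyw⟩).1, fun h y hyw => ⟨h y hyw.1, hw, hyw.2⟩⟩

lemma minSet_restrict_sdiff (hup : ∀ x ∈ Y, ∀ z, T.le x z → z ∈ Y) :
    (T.restrict (T.carrier \ Y)).minSet = T.minSet \ Y := by
  have hdown : ∀ x ∈ T.carrier \ Y, ∀ y, T.le y x → y ∈ T.carrier \ Y := fun x hx y hyx =>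
    Finset.mem_sdiff.2 ⟨(T.mem_of_le hyx).1, fun hy => (Finset.mem_sdiff.1 hx).2 (hup y hy x hyx)⟩
  ext x
  constructor
  · intro hx
    have hxS : x ∈ T.carrier \ Y := (Finset.mem_inter.1 (Finset.mem_filter.1 hx).1).2
    exact Finset.mem_sdiff.2
      ⟨(mem_minSet_restrict_iff hxS (hdown x hxS)).1 hx, (Finset.mem_sdiff.1 hxS).2⟩
  · intro hx
    obtain ⟨hmin, hxY⟩ := Finset.mem_sdiff.1 hx
    have hxS : x ∈ T.carrier \ Y := Finset.mem_sdiff.2 ⟨(Finset.mem_filter.1 hmin).1, hxY⟩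
    exact (mem_minSet_restrict_iff hxS (hdown x hxS)).2 hmin

lemma below_restrict (hYS : Y ⊆ S) (hbelow : T.below Y ⊆ S) :
    (T.restrict S).below Y = T.below Y := by
  ext x
  simp only [below, Finset.mem_filter, Finset.mem_sdiff, mem_restrict_carrier, restrict_le]
  constructor
  · rintro ⟨⟨⟨hx, -⟩, hxY⟩, y, hy, hxy, -⟩
    exact ⟨⟨hx, hxY⟩, y, hy, hxy⟩
  · rintro ⟨⟨hx, hxY⟩, y, hy, hxy⟩
    have hxS : x ∈ S := hbelow (Finset.mem_filter.2 ⟨Finset.mem_sdiff.2 ⟨hx, hxY⟩, y, hy, hxy⟩)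
    exact ⟨⟨⟨hx, hxS⟩, hxY⟩, y, hy, hxy, hxS, hYS hy⟩

/-- For an upper set the maximality clause of a connected component is automatic: an element
comparable to `Y` lies either above `Y`, hence in it, or in `Y_-`, hence is not strictly above
`Y_-`. -/
lemma isCC_iff_of_upper (hup : ∀ x ∈ Y, ∀ z, T.le x z → z ∈ Y) :
    T.IsCC {x | x ∈ T.carrier ∧ ∀ y ∈ T.below Y, T.lt y x} ↑Y ↔
      (↑Y : Set α).Nonempty ∧ ↑Y ⊆ {x | x ∈ T.carrier ∧ ∀ y ∈ T.below Y, T.lt y x} ∧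
        T.ConnOn ↑Y := by
  refine ⟨fun h => ⟨h.1, h.2.1, h.2.2.1⟩, fun ⟨hne, hsub, hconn⟩ => ⟨hne, hsub, hconn, ?_⟩⟩
  rintro x hx y ⟨hy, hlt⟩ (hxy | hyx)
  · exact hup x hx y hxy
  · by_contra hyY
    exact (hlt y (Finset.mem_filter.2 ⟨Finset.mem_sdiff.2 ⟨hy, hyY⟩, x, hx, hyx⟩)).2
      (T.le_refl y hy)

lemma Circ.subset_carrier (h : T.Circ Y) : Y ⊆ T.carrier := by
  obtain ⟨-, -, -, -, -, -, hsub, -⟩ := h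
  exact fun x hx => (hsub hx).1

lemma Circ.subset_of_restrict (h : (T.restrict S).Circ Y) : Y ⊆ S :=
  fun _ hx => (mem_restrict_carrier.1 (h.subset_carrier hx)).2

lemma mem_circSet : Y ∈ T.circSet ↔ T.Circ Y := by
  rw [circSet, Finset.mem_filter, Finset.mem_powerset]
  exact ⟨And.right, fun h => ⟨h.subset_carrier, h⟩⟩

lemma Circ.notMem_minSet (h : T.Circ Y) (hx : x ∈ Y) : x ∉ T.minSet := by
  obtain ⟨-, w, hw, -, -, -, hsub, -⟩ := h
  obtain ⟨hwx, hxw⟩ := (hsub hx).2 w hw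
  exact fun hmin => hxw ((Finset.mem_filter.1 hmin).2 w hwx)

lemma Circ.below_subset_minSet (h : T.Circ Y) : T.below Y ⊆ T.minSet := by
  obtain ⟨-, w, -, hw, hequiv, -⟩ := h
  intro x hx
  simp only [minSet, Finset.mem_filter] at hw ⊢
  exact ⟨(Finset.mem_sdiff.1 (Finset.mem_filter.1 hx).1).1,
    fun u hu => T.le_trans (hequiv x hx).1 (hw.2 u (T.le_trans hu (hequiv x hx).1))⟩

lemma Circ.minSet_restrict_sdiff (h : T.Circ Y) :
    (T.restrict (T.carrier \ Y)).minSet = T.minSet := by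
  rw [FinPre.minSet_restrict_sdiff h.1, Finset.sdiff_eq_self_of_disjoint]
  exact Finset.disjoint_right.2 fun _ hx => h.notMem_minSet hx

theorem circ_restrict_iff (hYS : Y ⊆ S) (hbelow : T.below Y ⊆ S)
    (hup : ∀ x ∈ Y, ∀ z, T.le x z → z ∈ S) : (T.restrict S).Circ Y ↔ T.Circ Y := by
  have hupper : (∀ x ∈ Y, ∀ z, (T.restrict S).le x z → z ∈ Y) ↔
      ∀ x ∈ Y, ∀ z, T.le x z → z ∈ Y :=
    ⟨fun h x hx z hxz => h x hx z ⟨hxz, hYS hx, hup x hx z hxz⟩,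
      fun h x hx z hxz => h x hx z hxz.1⟩
  unfold Circ
  rw [hupper]
  refine and_congr_right fun hYup => ?_
  rw [isCC_iff_of_upper (hupper.2 hYup), isCC_iff_of_upper hYup, below_restrict hYS hbelow,
    connOn_restrict_iff (Finset.coe_subset.2 hYS)]
  have hsub : ↑Y ⊆ {x | x ∈ (T.restrict S).carrier ∧ ∀ y ∈ T.below Y, (T.restrict S).lt y x} ↔
      ↑Y ⊆ {x | x ∈ T.carrier ∧ ∀ y ∈ T.below Y, T.lt y x} := by
    refine forall₂_congr fun x hx => and_congr ?_ (forall₂_congr fun y hy => ?_)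
    · exact ⟨fun h => (Finset.mem_inter.1 h).1, fun h => Finset.mem_inter.2 ⟨h, hYS hx⟩⟩
    · exact restrict_lt_iff (hbelow hy) (hYS hx)
  refine exists_congr fun w => and_congr_right fun hw => ?_
  have hdown : ∀ y, T.le y w → y ∈ S := by
    obtain ⟨hwc, z, hz, hwz⟩ := Finset.mem_filter.1 hw
    refine fun y hyw => hbelow (Finset.mem_filter.2 ⟨Finset.mem_sdiff.2 ⟨?_, ?_⟩, z, hz, ?_⟩)
    · exact (T.mem_of_le hyw).1
    · exact fun hy => (Finset.mem_sdiff.1 hwc).2 (hYup y hy w hyw)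
    · exact T.le_trans hyw hwz
  rw [mem_minSet_restrict_iff (hbelow hw) hdown, hsub,
    forall₂_congr fun x hx => restrict_equiv_iff (hbelow hx) (hbelow hw)]

/-- Cutting along `Y` keeps the minimal elements, so `Z` contains none of them; hence `Y` and
`Y_-` avoid `Z`, while `Z` and `Z_-` avoid `Y` because `Y` is an upper set. -/
theorem Circ.circ_of_circ_restrict_sdiff (hY : T.Circ Y)
    (hZ : (T.restrict (T.carrier \ Y)).Circ Z) :
    T.Circ Z ∧ (T.restrict (T.carrier \ Z)).Circ Y := by
  have hZS : Z ⊆ T.carrier \ Y := hZ.subset_of_restrict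
  have hZmin : ∀ x ∈ Z, x ∉ T.minSet := fun x hx =>
    hY.minSet_restrict_sdiff ▸ hZ.notMem_minSet hx
  have hZT : T.Circ Z := by
    refine (circ_restrict_iff hZS ?_ ?_).1 hZ
    · intro x hx
      obtain ⟨hxc, z, hz, hxz⟩ := Finset.mem_filter.1 hx
      exact Finset.mem_sdiff.2 ⟨(Finset.mem_sdiff.1 hxc).1,
        fun hxY => (Finset.mem_sdiff.1 (hZS hz)).2 (hY.1 x hxY z hxz)⟩
    · intro x hx z hxz
      refine Finset.mem_sdiff.2 ⟨(T.mem_of_le hxz).2, fun hzY => hZmin x hx ?_⟩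
      exact hY.below_subset_minSet (Finset.mem_filter.2 ⟨hZS hx, z, hzY, hxz⟩)
  have hYZ : Y ⊆ T.carrier \ Z := fun y hy =>
    Finset.mem_sdiff.2 ⟨hY.subset_carrier hy, fun hz => (Finset.mem_sdiff.1 (hZS hz)).2 hy⟩
  refine ⟨hZT, (circ_restrict_iff hYZ ?_ fun x hx z hxz => hYZ (hY.1 x hx z hxz)).2 hY⟩
  intro x hx
  exact Finset.mem_sdiff.2 ⟨(Finset.mem_sdiff.1 (Finset.mem_filter.1 hx).1).1,
    fun hxZ => hZmin x hxZ (hY.below_subset_minSet hx)⟩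

theorem circ_and_circ_restrict_sdiff_comm :
    T.Circ Y ∧ (T.restrict (T.carrier \ Y)).Circ Z ↔
      T.Circ Z ∧ (T.restrict (T.carrier \ Z)).Circ Y :=
  ⟨fun ⟨hY, hZ⟩ => hY.circ_of_circ_restrict_sdiff hZ,
    fun ⟨hZ, hY⟩ => hZ.circ_of_circ_restrict_sdiff hY⟩

lemma sum_circSet_restrict_sdiff_comm {M : Type*} [AddCommMonoid M] (T : FinPre α)
    (f : Finset α → Finset α → M) :
    ∑ Y ∈ T.circSet, ∑ Z ∈ (T.restrict (T.carrier \ Y)).circSet, f Y Z =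
      ∑ Y ∈ T.circSet, ∑ Z ∈ (T.restrict (T.carrier \ Y)).circSet, f Z Y := by
  refine Finset.sum_comm' fun Y Z => ?_
  simp only [mem_circSet]
  exact circ_and_circ_restrict_sdiff_comm.trans and_comm

lemma sum_circSet_restrict_sdiff {M : Type*} [AddCommMonoid M] [Module ℚ M] (T : FinPre α)
    (g : FinPre α → FinPre α → FinPre α → M) :
    ∑ Y ∈ T.circSet, ((T.restrict (T.carrier \ Y)).minSet.card : ℚ)⁻¹ •
        ∑ Z ∈ (T.restrict (T.carrier \ Y)).circSet,
          g (T.restrict Y) ((T.restrict (T.carrier \ Y)).restrict Z)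
            ((T.restrict (T.carrier \ Y)).restrict ((T.carrier \ Y) \ Z)) =
      ∑ Y ∈ T.circSet, ∑ Z ∈ (T.restrict (T.carrier \ Y)).circSet,
        (T.minSet.card : ℚ)⁻¹ •
          g (T.restrict Y) (T.restrict Z) (T.restrict ((T.carrier \ Y) \ Z)) := by
  refine Finset.sum_congr rfl fun Y hY => ?_
  rw [(mem_circSet.1 hY).minSet_restrict_sdiff, Finset.smul_sum]
  refine Finset.sum_congr rfl fun Z hZ => ?_
  rw [restrict_restrict, restrict_restrict,
    Finset.inter_eq_right.2 (mem_circSet.1 hZ).subset_of_restrict,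
    Finset.inter_eq_right.2 Finset.sdiff_subset]

end FinPre

theorem coproduct_nap_preorder_general {α : Type*} [DecidableEq α] (T : FinPre α) :
    (((T.minSet.card : ℚ))⁻¹ • ∑ Y ∈ T.circSet,
      (((T.restrict (T.carrier \ Y)).minSet.card : ℚ))⁻¹ •
        ∑ Z ∈ (T.restrict (T.carrier \ Y)).circSet,
          Finsupp.single
            (T.restrict Y, (T.restrict (T.carrier \ Y)).restrict Z,
              (T.restrict (T.carrier \ Y)).restrict ((T.carrier \ Y) \ Z))
            (1 : ℚ) :
        (FinPre α × FinPre α × FinPre α) →₀ ℚ)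
    = ((T.minSet.card : ℚ))⁻¹ • ∑ Y ∈ T.circSet,
      (((T.restrict (T.carrier \ Y)).minSet.card : ℚ))⁻¹ •
        ∑ Z ∈ (T.restrict (T.carrier \ Y)).circSet,
          Finsupp.single
            ((T.restrict (T.carrier \ Y)).restrict Z, T.restrict Y,
              (T.restrict (T.carrier \ Y)).restrict ((T.carrier \ Y) \ Z))
            (1 : ℚ) := by
  rw [FinPre.sum_circSet_restrict_sdiff T fun A B C => Finsupp.single (A, B, C) 1,
    FinPre.sum_circSet_restrict_sdiff T fun A B C => Finsupp.single (B, A, C) 1,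
    FinPre.sum_circSet_restrict_sdiff_comm T]
  simp only [sdiff_sdiff_comm]

/-- The coproduct `δ` on finite connected preorders satisfies the left
NAP identity `(id ⊗ δ) ∘ δ = τ¹² ∘ (id ⊗ δ) ∘ δ`: the element
`(1/|min(T)|) Σ_{Y ◎ T} (1/|min(T|_{X\Y})|) Σ_{Z ◎ T|_{X\Y}}
T|_Y ⊗ T|_Z ⊗ T|_{X\(Y∪Z)}` is invariant under exchanging the first two tensor
factors. -/
theorem coproduct_nap_preorder {α : Type*} [DecidableEq α] (T : FinPre α)
    (hT : T.Connected) :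
    (((T.minSet.card : ℚ))⁻¹ • ∑ Y ∈ T.circSet,
      (((T.restrict (T.carrier \ Y)).minSet.card : ℚ))⁻¹ •
        ∑ Z ∈ (T.restrict (T.carrier \ Y)).circSet,
          Finsupp.single
            (T.restrict Y, (T.restrict (T.carrier \ Y)).restrict Z,
              (T.restrict (T.carrier \ Y)).restrict ((T.carrier \ Y) \ Z))
            (1 : ℚ) :
        (FinPre α × FinPre α × FinPre α) →₀ ℚ)
    = ((T.minSet.card : ℚ))⁻¹ • ∑ Y ∈ T.circSet,
      (((T.restrict (T.carrier \ Y)).minSet.card : ℚ))⁻¹ •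
        ∑ Z ∈ (T.restrict (T.carrier \ Y)).circSet,
          Finsupp.single
            ((T.restrict (T.carrier \ Y)).restrict Z, T.restrict Y,
              (T.restrict (T.carrier \ Y)).restrict ((T.carrier \ Y) \ Z))
            (1 : ℚ) :=
  coproduct_nap_preorder_general T
end
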